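/- arXiv:2601.02610 — 4 statements merged into one kernel-verified Lean document; each statement's English description precedes it below -/
import Mathlib

section
/- Under Assumption (A2), the map k ∈ {1,…,m} ↦ P(σ(k) ∈ H0 | (S_j)_{j∈{1,…,n}}, (S_{n+σ(1)},…,S_{n+σ(m)})) is almost surely nondecreasing in k; that is, for all 1 ≤ k ≤ k' ≤ m, the conditional expectation of 1{σ(k') ∈ H0} given the σ-algebra generated by the calibration scores (S_1,…,S_n) and the decreasingly ordered test scores (S_{n+σ(1)},…,S_{n+σ(m)}) is a.s. at least the conditional expectation of 1{σ(k) ∈ H0} given the same σ-algebra. Consequently, for any random k̂ ∈ {0,…,m} measurable with respect to that σ-algebra, the top-k̂ procedure R = {i : S_{n+i} ≥ S_{n+σ(k̂)}} satisfies bFDR(R) = E[max_{0 ≤ k ≤ |R|} P(σ(k) ∈ H0 | (S_j)_{j≤n}, (S_{n+σ(1)},…,S_{n+σ(m)}))], with the convention that the term for k = 0 equals 0. -/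
open MeasureTheory Finset

noncomputable section

attribute [local instance] Classical.propDecidable

/-- The conformal p-value of test point `i` (scores are `s 1, …, s (n+m)`,
calibration scores are `s 1, …, s n`, the `i`-th test score is `s (n+i)`). -/
def pval (n : ℕ) (s : ℕ → ℝ) (i : ℕ) : ℝ :=
  (1 + (((Finset.Icc 1 n)).filter (fun j => s (n + i) ≤ s j)).card) / (n + 1)

/-- The p-value attached to the `k`-th largest test score, with the convention
`pOrd … 0 = 0`. -/
def pOrd (n : ℕ) (s : ℕ → ℝ) (σ : ℕ → ℕ) (k : ℕ) : ℝ :=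
  if k = 0 then 0 else pval n s (σ k)

/-- The largest element of `argmin_{k ∈ {0,…,m}} f k`. -/
def maxArgmin (m : ℕ) (f : ℕ → ℝ) : ℕ :=
  sSup {k | k ≤ m ∧ ∀ k' ≤ m, f k ≤ f k'}

/-- The largest element of the argmin of `f` over `{k ∈ {0,…,m} | P k}`. -/
def maxArgminOn (m : ℕ) (P : ℕ → Prop) (f : ℕ → ℝ) : ℕ :=
  sSup {k | k ≤ m ∧ P k ∧ ∀ k' ≤ m, P k' → f k ≤ f k'}

/-- The SL (support line) index `k̂_SL` at level `α`. -/
def khatSL (n m : ℕ) (α : ℝ) (s : ℕ → ℝ) (σ : ℕ → ℕ) : ℕ :=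
  maxArgmin m (fun k => pOrd n s σ k - α * k / m)

/-- The SLC (support line conformal) index `k̂_SLC` at level `α`. -/
def khatSLC (n m : ℕ) (α : ℝ) (s : ℕ → ℝ) (σ : ℕ → ℕ) : ℕ :=
  maxArgmin m (fun k => pOrd n s σ k - k * max (α / m - 1 / (n + 1)) 0)

/-- `σ` is the permutation of `{1,…,m}` ordering the test scores decreasingly,
with the convention `σ 0 = 0`. -/
def SortsTest (n m : ℕ) (s : ℕ → ℝ) (σ : ℕ → ℕ) : Prop :=
  σ 0 = 0 ∧ Set.BijOn σ (Finset.Icc 1 m) (Finset.Icc 1 m) ∧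
    ∀ k ∈ Finset.Icc 1 m, ∀ k' ∈ Finset.Icc 1 m, k < k' → s (n + σ k') < s (n + σ k)

/-- `σ'` enumerates the subsample `A ⊆ {1,…,m}` so that the corresponding test
scores are decreasing, with the convention `σ' 0 = 0`. -/
def SortsSub (n : ℕ) (s : ℕ → ℝ) (A : Finset ℕ) (σ' : ℕ → ℕ) : Prop :=
  σ' 0 = 0 ∧ Set.BijOn σ' (Finset.Icc 1 A.card) ↑A ∧
    ∀ k ∈ Finset.Icc 1 A.card, ∀ k' ∈ Finset.Icc 1 A.card, k < k' →
      s (n + σ' k') < s (n + σ' k)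

/-- The indices of the calibration scores together with the indices of the
null test scores. -/
def NullIdx (n : ℕ) (H0 : Finset ℕ) : Finset ℕ :=
  Finset.Icc 1 n ∪ H0.image (fun i => n + i)

/-- Assumption (A1), first part: the joint law of the scores is invariant under any
permutation of the coordinates indexed by `{1,…,n} ∪ {n+i : i ∈ H0}` fixing all the
other coordinates. -/
def ExchangeableNulls {Ω : Type*} [MeasurableSpace Ω] (μ : Measure Ω)
    (n : ℕ) (H0 : Finset ℕ) (S : Ω → ℕ → ℝ) : Prop :=
  ∀ e : Equiv.Perm ℕ, (∀ j ∉ NullIdx n H0, e j = j) →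
    Measure.map (fun ω => fun j => S ω (e j)) μ = Measure.map S μ

/-- The event `Ω_i`: the largest test score other than `S_{n+i}` is at least the
maximum of the calibration scores and of `S_{n+i}`. -/
def OmegaEvent {Ω : Type*} (n m : ℕ) (S : Ω → ℕ → ℝ) (i : ℕ) : Set Ω :=
  {ω | ∃ j ∈ (Finset.Icc 1 m).erase i,
    ∀ l ∈ Finset.Icc 1 n ∪ {n + i}, S ω l ≤ S ω (n + j)}

/-- The Storey estimator `π̂₀` with parameter `s0`. -/
def storey (n m s0 : ℕ) (s : ℕ → ℝ) : ℝ :=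
  (1 + (((Finset.Icc 1 m)).filter
      (fun i => ((s0 : ℝ) + 1) / (n + 1) ≤ pval n s i)).card) /
    (m * (1 - ((s0 : ℝ) + 1) / (n + 1)))

/-- The adaptive SL index `k̂_ASL` at level `α` with Storey parameter `s0`. -/
def khatASL (n m s0 : ℕ) (α : ℝ) (s : ℕ → ℝ) (σ : ℕ → ℕ) : ℕ :=
  maxArgminOn m (fun k => pOrd n s σ k ≤ (s0 : ℝ) / (n + 1))
    (fun k => pOrd n s σ k - α * k / (m * storey n m s0 s))

/-- The adaptive SLC index `k̂_ASLC` at level `α` with Storey parameter `s0`. -/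
def khatASLC (n m s0 : ℕ) (α : ℝ) (s : ℕ → ℝ) (σ : ℕ → ℕ) : ℕ :=
  maxArgmin m (fun k =>
    pOrd n s σ k - k * max (α / (m * storey n m s0 s) - 1 / (n + 1)) 0)

/-- The rejection set of the top-`k` procedure: all test points whose score is at
least the `k`-th largest one in the (sub)ordering `σ'` (empty if `k = 0`). -/
def rejSet (n m : ℕ) (s : ℕ → ℝ) (σ' : ℕ → ℕ) (k : ℕ) : Finset ℕ :=
  if k = 0 then ∅ else (Finset.Icc 1 m).filter (fun i => s (n + σ' k) ≤ s (n + i))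

/-- Probability of drawing a given subsample, for the uniform distribution over
subsets of `{1,…,m}` of cardinality `t`. -/
def subProb (m t : ℕ) (A : Finset ℕ) : ENNReal :=
  if A ∈ (Finset.Icc 1 m).powersetCard t
    then (((Finset.Icc 1 m).powersetCard t).card : ENNReal)⁻¹ else 0

/-- The `q`-th largest value among `v 0, …, v (B-1)`. -/
def kthLargest (B q : ℕ) (v : ℕ → ℕ) : ℕ :=
  sSup {t | q ≤ ((Finset.range B).filter (fun b => t ≤ v b)).card}

/-- The adaptive subsampled index: ASLC applied to a subsample of size `t`
(enumerated by `σ'`), where the Storey estimator is computed on the full test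
sample of size `m`. -/
def khatASLCsub (n m t s0 : ℕ) (α : ℝ) (s : ℕ → ℝ) (σ' : ℕ → ℕ) : ℕ :=
  maxArgminOn t (fun k => pOrd n s σ' k ≤ (s0 : ℝ) / (n + 1))
    (fun k => pOrd n s σ' k - k * max (α / (storey n m s0 s * t) - 1 / (n + 1)) 0)


/-- The "observed" random vector: the calibration scores together with the
decreasingly ordered test scores. -/
def obsVec {Ω : Type*} (n m : ℕ) (S : Ω → ℕ → ℝ) (σ : Ω → ℕ → ℕ) (ω : Ω) : ℕ → ℝ :=
  fun j => if j ∈ Finset.Icc 1 n then S ω j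
    else if j ∈ Finset.Icc (n + 1) (n + m) then S ω (n + σ ω (j - n)) else 0

/-- The σ-algebra generated by the calibration scores and the decreasingly
ordered test scores. -/
def obsAlg {Ω : Type*} (n m : ℕ) (S : Ω → ℕ → ℝ) (σ : Ω → ℕ → ℕ) :
    MeasurableSpace Ω :=
  MeasurableSpace.comap (obsVec n m S σ) inferInstance

namespace CNDaux

/-- lintegral of a product of single-coordinate functions over a finite pi measure. -/
theorem lintegral_fin_prod : ∀ (N : ℕ) (μ : Fin N → Measure ℝ), (∀ i, SigmaFinite (μ i)) →
    ∀ (g : Fin N → ℝ → ENNReal), (∀ i, Measurable (g i)) →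
    ∫⁻ x, ∏ i, g i (x i) ∂(Measure.pi μ) = ∏ i, ∫⁻ t, g i t ∂(μ i) := by
  intro N
  induction N with
  | zero =>
      intro μ _ g _
      simp only [Finset.univ_eq_empty, Finset.prod_empty]
      rw [lintegral_one]
      haveI : ∀ i, SigmaFinite (μ i) := fun i => i.elim0
      simp [Measure.pi_empty_univ]
  | succ N ih =>
      intro μ hsf g hg
      haveI : ∀ i, SigmaFinite (μ i) := hsf
      have hmp := (measurePreserving_piFinSuccAbove μ 0).symm
      rw [← hmp.lintegral_comp (f := fun x => ∏ i, g i (x i))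
        (Finset.measurable_prod _ (fun i _ => (hg i).comp (measurable_pi_apply i)))]
      have heq : ∀ y : ℝ × (Fin N → ℝ),
          (∏ i, g i ((MeasurableEquiv.piFinSuccAbove (fun _ => ℝ) 0).symm y i))
          = g 0 y.1 * ∏ j : Fin N, g (Fin.succ j) (y.2 j) := by
        intro y
        rw [Fin.prod_univ_succ]
        rw [MeasurableEquiv.piFinSuccAbove_symm_apply]
        simp only [Fin.insertNthEquiv, Equiv.coe_fn_mk, Fin.insertNth_zero,
          Fin.cons_zero, Fin.cons_succ, cast_eq]
      simp only [heq]
      rw [lintegral_prod_mul (f := g 0)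
        (g := fun z : Fin N → ℝ => ∏ j : Fin N, g (Fin.succ j) (z j))
        (hg 0).aemeasurable
        ((Finset.measurable_prod _ (fun i _ => (hg (Fin.succ i)).comp
          (measurable_pi_apply i))).aemeasurable)]
      have hpi : (Measure.pi fun j => μ (Fin.succAbove 0 j))
          = Measure.pi (fun j : Fin N => μ (Fin.succ j)) := by
        congr 1
      rw [hpi, ih (fun j => μ (Fin.succ j)) (fun j => hsf _) (fun j => g (Fin.succ j))
        (fun j => hg _)]
      rw [Fin.prod_univ_succ]

theorem lintegral_pi_prod {ι : Type*} [Fintype ι] (μ : ι → Measure ℝ)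
    [hsf : ∀ i, SigmaFinite (μ i)] (g : ι → ℝ → ENNReal) (hg : ∀ i, Measurable (g i)) :
    ∫⁻ x, ∏ i, g i (x i) ∂(Measure.pi μ) = ∏ i, ∫⁻ t, g i t ∂(μ i) := by
  classical
  let e := (Fintype.equivFin ι).symm
  have hmp := measurePreserving_piCongrLeft μ e
  rw [← hmp.lintegral_comp (f := fun x => ∏ i, g i (x i))
      (Finset.measurable_prod _ (fun i _ => (hg i).comp (measurable_pi_apply i)))]
  have heq : ∀ (x : Fin (Fintype.card ι) → ℝ),
      (∏ i, g i ((MeasurableEquiv.piCongrLeft (fun _ => ℝ) e) x i))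
        = ∏ j, g (e j) (x j) := by
    intro x
    rw [← e.prod_comp]
    refine Finset.prod_congr rfl (fun j _ => ?_)
    congr 1
    rw [MeasurableEquiv.coe_piCongrLeft]
    exact Equiv.piCongrLeft_apply_apply (fun _ => ℝ) e x j
  simp only [heq]
  rw [lintegral_fin_prod _ _ (fun j => hsf (e j)) _ (fun j => hg (e j)), ← e.prod_comp]

theorem pi_withDensity {ι : Type*} [Fintype ι] (μ : ι → Measure ℝ)
    [∀ i, SigmaFinite (μ i)] (g : ι → ℝ → ENNReal) (hg : ∀ i, Measurable (g i))
    [∀ i, SigmaFinite ((μ i).withDensity (g i))] :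
    Measure.pi (fun i => (μ i).withDensity (g i))
      = (Measure.pi μ).withDensity (fun x => ∏ i, g i (x i)) := by
  refine Measure.pi_eq (fun s hs => ?_)
  rw [withDensity_apply _ (MeasurableSet.univ_pi hs)]
  have : ∀ x : ι → ℝ, (Set.univ.pi s).indicator (fun x => ∏ i, g i (x i)) x
      = ∏ i, (s i).indicator (g i) (x i) := by
    intro x
    by_cases hx : x ∈ Set.univ.pi s
    · rw [Set.indicator_of_mem hx]
      exact Finset.prod_congr rfl (fun i _ =>
        (Set.indicator_of_mem (hx i (Set.mem_univ i)) _).symm)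
    · rw [Set.indicator_of_notMem hx]
      rw [Set.mem_univ_pi] at hx
      obtain ⟨i, hi⟩ := not_forall.mp hx
      exact (Finset.prod_eq_zero (Finset.mem_univ i)
        (by rw [Set.indicator_of_notMem hi])).symm
  rw [← lintegral_indicator (MeasurableSet.univ_pi hs)]
  simp only [this]
  rw [lintegral_pi_prod μ _ (fun i => (hg i).indicator (hs i))]
  exact Finset.prod_congr rfl (fun i _ => by
    rw [withDensity_apply _ (hs i), ← lintegral_indicator (hs i)])

theorem map_pi_of_iIndepFun {Ω : Type*} [MeasurableSpace Ω] (μ : Measure Ω)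
    [IsProbabilityMeasure μ] {ι : Type*} [Fintype ι] (X : ι → Ω → ℝ)
    (hX : ∀ i, Measurable (X i))
    (h : ProbabilityTheory.iIndepFun X μ) :
    Measure.map (fun ω i => X i ω) μ = Measure.pi (fun i => Measure.map (X i) μ) := by
  haveI : ∀ i, IsProbabilityMeasure (Measure.map (X i) μ) :=
    fun i => Measure.isProbabilityMeasure_map (hX i).aemeasurable
  refine (Measure.pi_eq (fun s hs => ?_)).symm
  have hvec : Measurable (fun ω i => X i ω) := measurable_pi_lambda _ hX
  rw [Measure.map_apply hvec (MeasurableSet.univ_pi hs)]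
  have : (fun ω i => X i ω) ⁻¹' (Set.univ.pi s) = ⋂ i ∈ Finset.univ, X i ⁻¹' s i := by
    ext ω; simp [Set.mem_pi]
  rw [this, h.measure_inter_preimage_eq_mul Finset.univ (fun i _ => hs i)]
  exact Finset.prod_congr rfl (fun i _ => (Measure.map_apply (hX i) (hs i)).symm)

theorem condexp_mono_of_setIntegral {α : Type*} {m m0 : MeasurableSpace α}
    (hm : m ≤ m0) (μ : Measure α) [IsFiniteMeasure μ] {f g : α → ℝ}
    (hf : Integrable f μ) (hg : Integrable g μ)
    (h : ∀ s, MeasurableSet[m] s → ∫ x in s, f x ∂μ ≤ ∫ x in s, g x ∂μ) :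
    μ[f|m] ≤ᵐ[μ] μ[g|m] := by
  haveI : IsFiniteMeasure (μ.trim hm) := by
    constructor
    rw [trim_measurableSet_eq hm MeasurableSet.univ]
    exact measure_lt_top μ _
  set D : α → ℝ := μ[g|m] - μ[f|m] with hD
  have hDsm : StronglyMeasurable[m] D := stronglyMeasurable_condExp.sub stronglyMeasurable_condExp
  have hDint : Integrable D μ := integrable_condExp.sub integrable_condExp
  have h0 : 0 ≤ᵐ[μ.trim hm] D := by
    refine ae_nonneg_of_forall_setIntegral_nonneg (hDint.trim hm hDsm) (fun s hs _ => ?_)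
    rw [← setIntegral_trim hm hDsm hs]
    have : ∫ x in s, D x ∂μ = (∫ x in s, (μ[g|m]) x ∂μ) - ∫ x in s, (μ[f|m]) x ∂μ := by
      exact integral_sub integrable_condExp.integrableOn integrable_condExp.integrableOn
    rw [this, setIntegral_condExp hm hg hs, setIntegral_condExp hm hf hs]
    linarith [h s hs]
  have h0' : (0 : α → ℝ) ≤ᵐ[μ] D := ae_le_of_ae_le_trim h0
  filter_upwards [h0'] with x hx
  have : (0:ℝ) ≤ (μ[g|m]) x - (μ[f|m]) x := hx
  linarith


lemma perm_strictMono_eq_one {m : ℕ} (ψ : Equiv.Perm (Fin m)) (h : StrictMono ψ) : ψ = 1 := by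
  have h2 : (h.orderIsoOfSurjective ψ ψ.surjective : Fin m ≃o Fin m)
      = OrderIso.refl (Fin m) := Subsingleton.elim _ _
  ext a
  have := congrArg (fun (e : Fin m ≃o Fin m) => e a) h2
  rw [show ψ a = a from by simpa using this]
  rfl

abbrev Jty (n m : ℕ) : Type := ↥(Finset.Icc 1 (n + m))

def tIdx (n m : ℕ) (a : Fin m) : Jty n m :=
  ⟨n + ((a : ℕ) + 1), by
    have := a.isLt
    simp only [Finset.mem_Icc]
    omega⟩

lemma tIdx_injective (n m : ℕ) : Function.Injective (tIdx n m) := by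
  intro a b h
  have : n + ((a : ℕ) + 1) = n + ((b : ℕ) + 1) := congrArg Subtype.val h
  exact Fin.ext (by omega)

def pnat (m : ℕ) (π : Equiv.Perm (Fin m)) (k : ℕ) : ℕ :=
  if h : k ∈ Finset.Icc 1 m then
    ((π ⟨k - 1, by have := Finset.mem_Icc.mp h; omega⟩ : Fin m) : ℕ) + 1
  else 0

lemma pnat_mem (m : ℕ) (π : Equiv.Perm (Fin m)) {k : ℕ} (hk : k ∈ Finset.Icc 1 m) :
    pnat m π k ∈ Finset.Icc 1 m := by
  rw [pnat, dif_pos hk]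
  have := (π ⟨k - 1, by have := Finset.mem_Icc.mp hk; omega⟩).isLt
  simp only [Finset.mem_Icc]
  omega

def Oset (n m : ℕ) (π : Equiv.Perm (Fin m)) : Set (Jty n m → ℝ) :=
  {x | ∀ a b : Fin m, a < b → x (tIdx n m (π b)) < x (tIdx n m (π a))}

lemma measurableSet_Oset (n m : ℕ) (π : Equiv.Perm (Fin m)) :
    MeasurableSet (Oset n m π) := by
  have : Oset n m π = ⋂ (a : Fin m), ⋂ (b : Fin m), ⋂ (_ : a < b),
      {x : Jty n m → ℝ | x (tIdx n m (π b)) < x (tIdx n m (π a))} := by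
    ext x; simp [Oset]
  rw [this]
  exact MeasurableSet.iInter (fun a => MeasurableSet.iInter (fun b =>
    MeasurableSet.iInter (fun _ =>
      measurableSet_lt (measurable_pi_apply _) (measurable_pi_apply _))))

def Phi (n m : ℕ) (π : Equiv.Perm (Fin m)) (x : Jty n m → ℝ) : ℕ → ℝ :=
  fun j =>
    if h1 : j ∈ Finset.Icc 1 n then
      x ⟨j, by simp only [Finset.mem_Icc] at h1 ⊢; omega⟩
    else if h2 : j ∈ Finset.Icc (n + 1) (n + m) then
      x (tIdx n m (π ⟨j - n - 1, by simp only [Finset.mem_Icc] at h2; omega⟩))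
    else 0

lemma measurable_Phi (n m : ℕ) (π : Equiv.Perm (Fin m)) : Measurable (Phi n m π) := by
  refine measurable_pi_lambda _ (fun j => ?_)
  by_cases h1 : j ∈ Finset.Icc 1 n
  · simp only [Phi, dif_pos h1]; exact measurable_pi_apply _
  · by_cases h2 : j ∈ Finset.Icc (n + 1) (n + m)
    · simp only [Phi, dif_neg h1, dif_pos h2]; exact measurable_pi_apply _
    · simp only [Phi, dif_neg h1, dif_neg h2]; exact measurable_const

lemma sorts_exists_perm {n m : ℕ} {s : ℕ → ℝ} {σf : ℕ → ℕ} (h : SortsTest n m s σf) :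
    ∃ π : Equiv.Perm (Fin m), ∀ k ∈ Finset.Icc 1 m, σf k = pnat m π k := by
  obtain ⟨-, hbij, -⟩ := h
  have hmem : ∀ k ∈ Finset.Icc 1 m, σf k ∈ Finset.Icc 1 m := by
    intro k hk
    exact_mod_cast hbij.mapsTo (by exact_mod_cast hk)
  have hp : ∀ a : Fin m, σf ((a : ℕ) + 1) - 1 < m := by
    intro a
    have ha : ((a : ℕ) + 1) ∈ Finset.Icc 1 m := by
      simp only [Finset.mem_Icc]; have := a.isLt; omega
    have := Finset.mem_Icc.mp (hmem _ ha)
    omega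
  set p : Fin m → Fin m := fun a => ⟨σf ((a : ℕ) + 1) - 1, hp a⟩ with hpdef
  have hinj : Function.Injective p := by
    intro a b hab
    have h1 : ((a : ℕ) + 1) ∈ Finset.Icc 1 m := by
      simp only [Finset.mem_Icc]; have := a.isLt; omega
    have h2 : ((b : ℕ) + 1) ∈ Finset.Icc 1 m := by
      simp only [Finset.mem_Icc]; have := b.isLt; omega
    have hv : σf ((a : ℕ) + 1) - 1 = σf ((b : ℕ) + 1) - 1 := congrArg Fin.val hab
    have ha1 := Finset.mem_Icc.mp (hmem _ h1)
    have hb1 := Finset.mem_Icc.mp (hmem _ h2)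
    have : σf ((a : ℕ) + 1) = σf ((b : ℕ) + 1) := by omega
    have := hbij.injOn (by exact_mod_cast h1) (by exact_mod_cast h2) this
    exact Fin.ext (by omega)
  refine ⟨Equiv.ofBijective p (Finite.injective_iff_bijective.mp hinj), ?_⟩
  intro k hk
  rw [pnat, dif_pos hk]
  have hk1 := Finset.mem_Icc.mp hk
  have : (Equiv.ofBijective p (Finite.injective_iff_bijective.mp hinj))
      ⟨k - 1, by omega⟩ = p ⟨k - 1, by omega⟩ := rfl
  rw [this]
  have hmem' := Finset.mem_Icc.mp (hmem k hk)
  show σf k = σf (k - 1 + 1) - 1 + 1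
  rw [show k - 1 + 1 = k by omega]
  omega

lemma mem_Oset_of_sorts {n m : ℕ} {s : ℕ → ℝ} {σf : ℕ → ℕ} {π : Equiv.Perm (Fin m)}
    (h : SortsTest n m s σf) (hπ : ∀ k ∈ Finset.Icc 1 m, σf k = pnat m π k) :
    (fun j : Jty n m => s (j : ℕ)) ∈ Oset n m π := by
  intro a b hab
  have ha : ((a : ℕ) + 1) ∈ Finset.Icc 1 m := by
    simp only [Finset.mem_Icc]; have := a.isLt; omega
  have hb : ((b : ℕ) + 1) ∈ Finset.Icc 1 m := by
    simp only [Finset.mem_Icc]; have := b.isLt; omega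
  have hva : ((π a : ℕ) + 1) = σf ((a : ℕ) + 1) := by
    rw [hπ _ ha, pnat, dif_pos ha]
    congr 2
  have hvb : ((π b : ℕ) + 1) = σf ((b : ℕ) + 1) := by
    rw [hπ _ hb, pnat, dif_pos hb]
    congr 2
  have := h.2.2 ((a : ℕ) + 1) ha ((b : ℕ) + 1) hb (by
    have : (a : ℕ) < (b : ℕ) := hab
    omega)
  show s ((tIdx n m (π b) : ℕ)) < s ((tIdx n m (π a) : ℕ))
  have hta : ((tIdx n m (π a) : ℕ)) = n + ((π a : ℕ) + 1) := rfl
  have htb : ((tIdx n m (π b) : ℕ)) = n + ((π b : ℕ) + 1) := rfl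
  rw [hta, htb, hva, hvb]
  exact this

lemma Oset_disjoint {n m : ℕ} {π π' : Equiv.Perm (Fin m)} {x : Jty n m → ℝ}
    (h : x ∈ Oset n m π) (h' : x ∈ Oset n m π') : π = π' := by
  set u : Fin m → ℝ := fun c => x (tIdx n m c) with hu
  set ψ : Equiv.Perm (Fin m) := π'.trans π.symm with hψ
  have hψa : ∀ a, π (ψ a) = π' a := by intro a; simp [hψ]
  have hmono : StrictMono ψ := by
    intro a b hab
    have h1 : u (π' b) < u (π' a) := h' a b hab
    rcases lt_trichotomy (ψ a) (ψ b) with hlt | heq | hgt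
    · exact hlt
    · exfalso
      have : π' a = π' b := by rw [← hψa a, ← hψa b, heq]
      rw [this] at h1
      exact lt_irrefl _ h1
    · exfalso
      have h2 : u (π (ψ a)) < u (π (ψ b)) := h _ _ hgt
      rw [hψa a, hψa b] at h2
      exact lt_irrefl _ (h1.trans h2)
  have := perm_strictMono_eq_one ψ hmono
  ext a
  have : ψ a = a := by rw [this]; rfl
  have := congrArg π this
  rw [hψa a] at this
  exact (congrArg Fin.val this).symm

lemma obsVec_eq_Phi {Ω : Type*} (n m : ℕ) (S : Ω → ℕ → ℝ) (σ : Ω → ℕ → ℕ) (ω : Ω)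
    (h : SortsTest n m (S ω) (σ ω)) (π : Equiv.Perm (Fin m))
    (hπ : ∀ k ∈ Finset.Icc 1 m, σ ω k = pnat m π k) :
    obsVec n m S σ ω = Phi n m π (fun j : Jty n m => S ω (j : ℕ)) := by
  funext j
  by_cases h1 : j ∈ Finset.Icc 1 n
  · rw [obsVec, if_pos h1, Phi, dif_pos h1]
  · by_cases h2 : j ∈ Finset.Icc (n + 1) (n + m)
    · rw [obsVec, if_neg h1, if_pos h2, Phi, dif_neg h1, dif_pos h2]
      have hk : j - n ∈ Finset.Icc 1 m := by
        simp only [Finset.mem_Icc] at h2 ⊢; omega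
      rw [hπ _ hk, pnat, dif_pos hk]
      rfl
    · rw [obsVec, if_neg h1, if_neg h2, Phi, dif_neg h1, dif_neg h2]

lemma rejSet_card {n m : ℕ} {s : ℕ → ℝ} {σf : ℕ → ℕ} (h : SortsTest n m s σf)
    {k : ℕ} (hk : k ∈ Finset.Icc 1 m) : (rejSet n m s σf k).card = k := by
  obtain ⟨-, hbij, hmono⟩ := h
  have hk1 := Finset.mem_Icc.mp hk
  have hsub : (Finset.Icc 1 k : Set ℕ) ⊆ (Finset.Icc 1 m : Set ℕ) := by
    intro i hi
    simp only [Finset.coe_Icc, Set.mem_Icc] at hi ⊢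
    omega
  have heq : rejSet n m s σf k = (Finset.Icc 1 k).image σf := by
    ext i
    rw [rejSet, if_neg (by omega : ¬ k = 0)]
    simp only [Finset.mem_filter, Finset.mem_image]
    constructor
    · rintro ⟨hi, hle⟩
      obtain ⟨k'', hk'', hkeq⟩ := hbij.surjOn (by exact_mod_cast hi)
      have hk''m : k'' ∈ Finset.Icc 1 m := by exact_mod_cast hk''
      refine ⟨k'', ?_, hkeq⟩
      by_contra hcon
      have hgt : k < k'' := by
        simp only [Finset.mem_Icc] at hk''m hcon ⊢
        omega
      have := hmono k hk k'' hk''m hgt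
      rw [hkeq] at this
      exact absurd hle (not_le.mpr this)
    · rintro ⟨k'', hk'', rfl⟩
      have hk''1 := Finset.mem_Icc.mp hk''
      have hk''m : k'' ∈ Finset.Icc 1 m := by
        simp only [Finset.mem_Icc]; omega
      refine ⟨by exact_mod_cast hbij.mapsTo (by exact_mod_cast hk''m), ?_⟩
      rcases eq_or_lt_of_le hk''1.2 with heq' | hlt
      · rw [heq']
      · exact le_of_lt (hmono k'' hk''m k hk hlt)
  rw [heq, Finset.card_image_of_injOn (hbij.injOn.mono hsub), Nat.card_Icc]
  omega

/-! ### Measure-level lemmas -/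

def gd (n : ℕ) (H0 : Finset ℕ) (f0 : ℝ → ℝ) (f : ℕ → ℝ → ℝ) (jv : ℕ) : ℝ → ENNReal :=
  fun x => ENNReal.ofReal (if jv ≤ n ∨ jv - n ∈ H0 then f0 x else f (jv - n) x)

lemma measurable_gd (n : ℕ) (H0 : Finset ℕ) {f0 : ℝ → ℝ} {f : ℕ → ℝ → ℝ}
    (hf0meas : Measurable f0) (hfmeas : ∀ i, Measurable (f i)) (jv : ℕ) :
    Measurable (gd n H0 f0 f jv) := by
  unfold gd
  by_cases h : jv ≤ n ∨ jv - n ∈ H0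
  · simp only [if_pos h]
    exact ENNReal.measurable_ofReal.comp hf0meas
  · simp only [if_neg h]
    exact ENNReal.measurable_ofReal.comp (hfmeas _)

def Eset (n m : ℕ) (π : Equiv.Perm (Fin m)) (B : Set (ℕ → ℝ)) : Set (Jty n m → ℝ) :=
  Oset n m π ∩ Phi n m π ⁻¹' B

lemma measurableSet_Eset (n m : ℕ) (π : Equiv.Perm (Fin m)) {B : Set (ℕ → ℝ)}
    (hB : MeasurableSet B) : MeasurableSet (Eset n m π B) :=
  (measurableSet_Oset n m π).inter ((measurable_Phi n m π) hB)

def Fk (m : ℕ) (H0 : Finset ℕ) (k : ℕ) : Finset (Equiv.Perm (Fin m)) :=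
  Finset.univ.filter (fun π => pnat m π k ∈ H0)

def Uk {Ω : Type*} (n m : ℕ) (H0 : Finset ℕ) (S : Ω → ℕ → ℝ) (k : ℕ) : Set Ω :=
  (fun ω (j : Jty n m) => S ω (j : ℕ)) ⁻¹' (⋃ π ∈ Fk m H0 k, Oset n m π)

section Main

variable {Ω : Type*} [MeasurableSpace Ω] {μ : Measure Ω} [IsProbabilityMeasure μ]
  {n m : ℕ} {S : Ω → ℕ → ℝ} {σ : Ω → ℕ → ℕ} {H0 : Finset ℕ}
  {f0 : ℝ → ℝ} {f : ℕ → ℝ → ℝ}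

lemma measurable_Xvec (hS : Measurable S) :
    Measurable (fun ω (j : Jty n m) => S ω (j : ℕ)) :=
  measurable_pi_lambda _ (fun j => (measurable_pi_apply (j : ℕ)).comp hS)

lemma measurableSet_Uk (hS : Measurable S) (k : ℕ) :
    MeasurableSet (Uk n m H0 S k) :=
  (measurable_Xvec hS) (MeasurableSet.biUnion (Finset.countable_toSet _)
    (fun π _ => measurableSet_Oset n m π))

lemma law_marginal (hn : 1 ≤ n) (hH0 : H0 ⊆ Finset.Icc 1 m)
    (hlaw0 : ∀ j ∈ NullIdx n H0, Measure.map (fun ω => S ω j) μ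
      = volume.withDensity (fun x => ENNReal.ofReal (f0 x)))
    (hlaw1 : ∀ i ∈ Finset.Icc 1 m, i ∉ H0 → Measure.map (fun ω => S ω (n + i)) μ
      = volume.withDensity (fun x => ENNReal.ofReal (f i x)))
    (j : Jty n m) :
    Measure.map (fun ω => S ω (j : ℕ)) μ = volume.withDensity (gd n H0 f0 f (j : ℕ)) := by
  have hj := Finset.mem_Icc.mp j.2
  rcases le_or_gt (j : ℕ) n with hle | hgt
  · have : gd n H0 f0 f (j : ℕ) = fun x => ENNReal.ofReal (f0 x) := by
      funext x; simp only [gd, if_pos (Or.inl hle)]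
    rw [this]
    exact hlaw0 _ (Finset.mem_union.mpr (Or.inl (Finset.mem_Icc.mpr ⟨hj.1, hle⟩)))
  · set i := (j : ℕ) - n with hidef
    have hji : (j : ℕ) = n + i := by omega
    have him : i ∈ Finset.Icc 1 m := by simp only [Finset.mem_Icc]; omega
    by_cases hiH : i ∈ H0
    · have : gd n H0 f0 f (j : ℕ) = fun x => ENNReal.ofReal (f0 x) := by
        funext x; simp only [gd, if_pos (Or.inr (show (j : ℕ) - n ∈ H0 from hiH))]
      rw [this]
      refine hlaw0 _ (Finset.mem_union.mpr (Or.inr ?_))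
      exact Finset.mem_image.mpr ⟨i, hiH, hji.symm⟩
    · have hcond : ¬ ((j : ℕ) ≤ n ∨ (j : ℕ) - n ∈ H0) := by
        push_neg
        exact ⟨by omega, hiH⟩
      have : gd n H0 f0 f (j : ℕ) = fun x => ENNReal.ofReal (f ((j : ℕ) - n) x) := by
        funext x; simp only [gd, if_neg hcond]
      rw [this]
      have := hlaw1 i him hiH
      rw [← hji] at this
      exact this

lemma law_pi (hn : 1 ≤ n) (hS : Measurable S) (hH0 : H0 ⊆ Finset.Icc 1 m)
    (hindep : ProbabilityTheory.iIndepFun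
      (fun j : (Finset.Icc 1 (n + m) : Finset ℕ) => fun ω => S ω (j : ℕ)) μ)
    (hlaw0 : ∀ j ∈ NullIdx n H0, Measure.map (fun ω => S ω j) μ
      = volume.withDensity (fun x => ENNReal.ofReal (f0 x)))
    (hlaw1 : ∀ i ∈ Finset.Icc 1 m, i ∉ H0 → Measure.map (fun ω => S ω (n + i)) μ
      = volume.withDensity (fun x => ENNReal.ofReal (f i x))) :
    Measure.map (fun ω (j : Jty n m) => S ω (j : ℕ)) μ
      = Measure.pi (fun j : Jty n m => volume.withDensity (gd n H0 f0 f (j : ℕ))) := by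
  rw [map_pi_of_iIndepFun μ (fun (j : Jty n m) (ω : Ω) => S ω (j : ℕ))
    (fun j => (measurable_pi_apply (j : ℕ)).comp hS) hindep]
  congr 1
  funext j
  exact law_marginal hn hH0 hlaw0 hlaw1 j

lemma sigmaFinite_nu (hn : 1 ≤ n) (hS : Measurable S) (hH0 : H0 ⊆ Finset.Icc 1 m)
    (hlaw0 : ∀ j ∈ NullIdx n H0, Measure.map (fun ω => S ω j) μ
      = volume.withDensity (fun x => ENNReal.ofReal (f0 x)))
    (hlaw1 : ∀ i ∈ Finset.Icc 1 m, i ∉ H0 → Measure.map (fun ω => S ω (n + i)) μ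
      = volume.withDensity (fun x => ENNReal.ofReal (f i x)))
    (j : Jty n m) : IsProbabilityMeasure (volume.withDensity (gd n H0 f0 f (j : ℕ))) := by
  rw [← law_marginal hn hH0 hlaw0 hlaw1 j]
  exact Measure.isProbabilityMeasure_map ((measurable_pi_apply (j : ℕ)).comp hS).aemeasurable

lemma law_density (hn : 1 ≤ n) (hS : Measurable S) (hH0 : H0 ⊆ Finset.Icc 1 m)
    (hf0meas : Measurable f0) (hfmeas : ∀ i, Measurable (f i))
    (hindep : ProbabilityTheory.iIndepFun
      (fun j : (Finset.Icc 1 (n + m) : Finset ℕ) => fun ω => S ω (j : ℕ)) μ)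
    (hlaw0 : ∀ j ∈ NullIdx n H0, Measure.map (fun ω => S ω j) μ
      = volume.withDensity (fun x => ENNReal.ofReal (f0 x)))
    (hlaw1 : ∀ i ∈ Finset.Icc 1 m, i ∉ H0 → Measure.map (fun ω => S ω (n + i)) μ
      = volume.withDensity (fun x => ENNReal.ofReal (f i x))) :
    Measure.map (fun ω (j : Jty n m) => S ω (j : ℕ)) μ
      = (Measure.pi (fun _ : Jty n m => (volume : Measure ℝ))).withDensity
          (fun x => ∏ j : Jty n m, gd n H0 f0 f (j : ℕ) (x j)) := by
  haveI : ∀ j : Jty n m, SigmaFinite (volume.withDensity (gd n H0 f0 f (j : ℕ))) := by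
    intro j
    haveI := sigmaFinite_nu hn hS hH0 hlaw0 hlaw1 j
    infer_instance
  rw [law_pi hn hS hH0 hindep hlaw0 hlaw1]
  exact pi_withDensity (fun _ => volume) _
    (fun j => measurable_gd n H0 hf0meas hfmeas (j : ℕ))

lemma swap_intertwine (n m : ℕ) (π : Equiv.Perm (Fin m)) (ka kb : Fin m) (hab : ka ≠ kb)
    (a : Fin m) :
    Equiv.swap (tIdx n m (π ka)) (tIdx n m (π kb)) (tIdx n m (π a))
      = tIdx n m ((π * Equiv.swap ka kb) a) := by
  by_cases h1 : a = ka
  · rw [h1, Equiv.swap_apply_left]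
    congr 1
    rw [Equiv.Perm.mul_apply, Equiv.swap_apply_left]
  · by_cases h2 : a = kb
    · rw [h2, Equiv.swap_apply_right]
      congr 1
      rw [Equiv.Perm.mul_apply, Equiv.swap_apply_right]
    · rw [Equiv.swap_apply_of_ne_of_ne
        (fun h => h1 (π.injective (tIdx_injective n m h)))
        (fun h => h2 (π.injective (tIdx_injective n m h)))]
      congr 1
      rw [Equiv.Perm.mul_apply, Equiv.swap_apply_of_ne_of_ne h1 h2]

lemma swap_preimage (n m : ℕ) (π : Equiv.Perm (Fin m)) (ka kb : Fin m) (hab : ka ≠ kb)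
    (B : Set (ℕ → ℝ)) :
    (fun x : Jty n m → ℝ => x ∘ (Equiv.swap (tIdx n m (π ka)) (tIdx n m (π kb))))
        ⁻¹' (Eset n m π B)
      = Eset n m (π * Equiv.swap ka kb) B := by
  set es := Equiv.swap (tIdx n m (π ka)) (tIdx n m (π kb)) with hes
  set π' := π * Equiv.swap ka kb with hπ'
  have key : ∀ (x : Jty n m → ℝ) (a : Fin m),
      (x ∘ es) (tIdx n m (π a)) = x (tIdx n m (π' a)) := by
    intro x a
    show x (es (tIdx n m (π a))) = _
    rw [hes, swap_intertwine n m π ka kb hab a]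
  ext x
  constructor
  · rintro ⟨hO, hP⟩
    constructor
    · intro a b hltab
      have h3 : (x ∘ es) (tIdx n m (π b)) < (x ∘ es) (tIdx n m (π a)) := hO a b hltab
      rw [key x a, key x b] at h3
      exact h3
    · show Phi n m π' x ∈ B
      have : Phi n m π' x = Phi n m π (x ∘ es) := by
        funext j
        unfold Phi
        by_cases h1 : j ∈ Finset.Icc 1 n
        · rw [dif_pos h1, dif_pos h1]
          show x _ = (x ∘ es) _
          have hne1 : (⟨j, by simp only [Finset.mem_Icc] at h1 ⊢; omega⟩ : Jty n m)
              ≠ tIdx n m (π ka) := by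
            intro hcon
            have := congrArg Subtype.val hcon
            simp only [tIdx] at this
            simp only [Finset.mem_Icc] at h1
            omega
          have hne2 : (⟨j, by simp only [Finset.mem_Icc] at h1 ⊢; omega⟩ : Jty n m)
              ≠ tIdx n m (π kb) := by
            intro hcon
            have := congrArg Subtype.val hcon
            simp only [tIdx] at this
            simp only [Finset.mem_Icc] at h1
            omega
          show x _ = x (es _)
          rw [hes, Equiv.swap_apply_of_ne_of_ne hne1 hne2]
        · by_cases h2 : j ∈ Finset.Icc (n + 1) (n + m)
          · rw [dif_neg h1, dif_neg h1, dif_pos h2, dif_pos h2]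
            exact (key x _).symm
          · rw [dif_neg h1, dif_neg h1, dif_neg h2, dif_neg h2]
      rw [this]
      exact hP
  · rintro ⟨hO, hP⟩
    constructor
    · intro a b hltab
      show (x ∘ es) (tIdx n m (π b)) < (x ∘ es) (tIdx n m (π a))
      rw [key x a, key x b]
      exact hO a b hltab
    · show Phi n m π (x ∘ es) ∈ B
      have : Phi n m π' x = Phi n m π (x ∘ es) := by
        funext j
        unfold Phi
        by_cases h1 : j ∈ Finset.Icc 1 n
        · rw [dif_pos h1, dif_pos h1]
          have hne1 : (⟨j, by simp only [Finset.mem_Icc] at h1 ⊢; omega⟩ : Jty n m)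
              ≠ tIdx n m (π ka) := by
            intro hcon
            have := congrArg Subtype.val hcon
            simp only [tIdx] at this
            simp only [Finset.mem_Icc] at h1
            omega
          have hne2 : (⟨j, by simp only [Finset.mem_Icc] at h1 ⊢; omega⟩ : Jty n m)
              ≠ tIdx n m (π kb) := by
            intro hcon
            have := congrArg Subtype.val hcon
            simp only [tIdx] at this
            simp only [Finset.mem_Icc] at h1
            omega
          show x _ = x (es _)
          rw [hes, Equiv.swap_apply_of_ne_of_ne hne1 hne2]
        · by_cases h2 : j ∈ Finset.Icc (n + 1) (n + m)
          · rw [dif_neg h1, dif_neg h1, dif_pos h2, dif_pos h2]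
            exact (key x _).symm
          · rw [dif_neg h1, dif_neg h1, dif_neg h2, dif_neg h2]
      rw [← this]
      exact hP

lemma swap_ineq (hn : 1 ≤ n) (hS : Measurable S) (hH0 : H0 ⊆ Finset.Icc 1 m)
    (hf0meas : Measurable f0) (hf0nn : ∀ x, 0 ≤ f0 x)
    (hfmeas : ∀ i, Measurable (f i)) (hfnn : ∀ i x, 0 ≤ f i x)
    (hindep : ProbabilityTheory.iIndepFun
      (fun j : (Finset.Icc 1 (n + m) : Finset ℕ) => fun ω => S ω (j : ℕ)) μ)
    (hlaw0 : ∀ j ∈ NullIdx n H0, Measure.map (fun ω => S ω j) μ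
      = volume.withDensity (fun x => ENNReal.ofReal (f0 x)))
    (hlaw1 : ∀ i ∈ Finset.Icc 1 m, i ∉ H0 → Measure.map (fun ω => S ω (n + i)) μ
      = volume.withDensity (fun x => ENNReal.ofReal (f i x)))
    (hMLR : ∀ i ∈ Finset.Icc 1 m, i ∉ H0 →
      ∀ x y : ℝ, x ≤ y → f i x * f0 y ≤ f i y * f0 x)
    (π : Equiv.Perm (Fin m)) (ka kb : Fin m) (hab : ka < kb)
    (hnull : ((π ka : ℕ) + 1) ∈ H0) {B : Set (ℕ → ℝ)} (hB : MeasurableSet B) :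
    Measure.map (fun ω (j : Jty n m) => S ω (j : ℕ)) μ (Eset n m π B)
      ≤ Measure.map (fun ω (j : Jty n m) => S ω (j : ℕ)) μ
          (Eset n m (π * Equiv.swap ka kb) B) := by
  set ja := tIdx n m (π ka) with hja
  set jb := tIdx n m (π kb) with hjb
  set es := Equiv.swap ja jb with hes
  set ν : Jty n m → Measure ℝ := fun j => volume.withDensity (gd n H0 f0 f (j : ℕ)) with hν
  haveI hsf : ∀ j : Jty n m, SigmaFinite (ν j) := by
    intro j
    haveI := sigmaFinite_nu hn hS hH0 hlaw0 hlaw1 j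
    infer_instance
  have hρ : Measure.map (fun ω (j : Jty n m) => S ω (j : ℕ)) μ = Measure.pi ν :=
    law_pi hn hS hH0 hindep hlaw0 hlaw1
  have hT : Measurable (fun x : Jty n m → ℝ => x ∘ es) :=
    measurable_pi_lambda _ (fun j => measurable_pi_apply (es j))
  have hcoe : ⇑(MeasurableEquiv.piCongrLeft (fun _ : Jty n m => ℝ) es)
      = fun x : Jty n m → ℝ => x ∘ es := by
    funext x
    funext j
    rw [MeasurableEquiv.coe_piCongrLeft]
    conv_lhs => rw [show j = es (es j) from (Equiv.swap_apply_self ja jb j).symm]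
    rw [Equiv.piCongrLeft_apply_apply]
    rfl
  have hmapT : Measure.map (fun x : Jty n m → ℝ => x ∘ es) (Measure.pi ν)
      = Measure.pi (fun j => ν (es j)) := by
    have h1 := measurePreserving_piCongrLeft (fun j : Jty n m => ν (es j)) es
    have h2 : (fun i' : Jty n m => ν (es (es i'))) = ν := by
      funext i'
      rw [Equiv.swap_apply_self]
    rw [h2, hcoe] at h1
    exact h1.map_eq
  have hERHS : Eset n m (π * Equiv.swap ka kb) B
      = (fun x : Jty n m → ℝ => x ∘ es) ⁻¹' (Eset n m π B) :=
    (swap_preimage n m π ka kb hab.ne B).symm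
  have hRHS : Measure.pi ν (Eset n m (π * Equiv.swap ka kb) B)
      = Measure.pi (fun j => ν (es j)) (Eset n m π B) := by
    rw [hERHS, ← Measure.map_apply hT (measurableSet_Eset n m π hB), hmapT]
  have hgmeas : ∀ j : Jty n m, Measurable (gd n H0 f0 f (j : ℕ)) :=
    fun j => measurable_gd n H0 hf0meas hfmeas _
  have hpi1 : Measure.pi ν
      = (Measure.pi (fun _ : Jty n m => (volume : Measure ℝ))).withDensity
          (fun x => ∏ j : Jty n m, gd n H0 f0 f (j : ℕ) (x j)) :=
    pi_withDensity (fun _ => volume) _ hgmeas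
  have hpi2 : Measure.pi (fun j : Jty n m => ν (es j))
      = (Measure.pi (fun _ : Jty n m => (volume : Measure ℝ))).withDensity
          (fun x => ∏ j : Jty n m, gd n H0 f0 f ((es j : Jty n m) : ℕ) (x j)) :=
    pi_withDensity (fun _ => volume) _ (fun j => hgmeas (es j))
  have hpoint : ∀ x ∈ Eset n m π B,
      (∏ j : Jty n m, gd n H0 f0 f (j : ℕ) (x j))
        ≤ ∏ j : Jty n m, gd n H0 f0 f ((es j : Jty n m) : ℕ) (x j) := by
    intro x hx
    have hlt : x jb < x ja := hx.1 ka kb hab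
    have hne : jb ≠ ja := by
      intro h
      exact (ne_of_lt hab) (π.injective (tIdx_injective n m h.symm))
    have hrw : ∀ h : Jty n m → ENNReal, ∏ j, h j
        = h ja * (h jb * ∏ j ∈ (Finset.univ.erase ja).erase jb, h j) := by
      intro h
      rw [Finset.mul_prod_erase (Finset.univ.erase ja) h
        (Finset.mem_erase.mpr ⟨hne, Finset.mem_univ jb⟩),
        Finset.mul_prod_erase Finset.univ h (Finset.mem_univ ja)]
    rw [hrw (fun j => gd n H0 f0 f (j : ℕ) (x j)),
      hrw (fun j => gd n H0 f0 f ((es j : Jty n m) : ℕ) (x j))]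
    have hrest : ∏ j ∈ (Finset.univ.erase ja).erase jb,
        gd n H0 f0 f ((es j : Jty n m) : ℕ) (x j)
        = ∏ j ∈ (Finset.univ.erase ja).erase jb, gd n H0 f0 f (j : ℕ) (x j) := by
      refine Finset.prod_congr rfl (fun j hj => ?_)
      have hj1 := Finset.mem_erase.mp hj
      have hj2 := Finset.mem_erase.mp hj1.2
      rw [hes, Equiv.swap_apply_of_ne_of_ne hj2.1 hj1.1]
    rw [hrest]
    have hesja : es ja = jb := Equiv.swap_apply_left ja jb
    have hesjb : es jb = ja := Equiv.swap_apply_right ja jb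
    rw [← mul_assoc, ← mul_assoc]
    refine mul_le_mul_left ?_ _
    rw [hesja, hesjb]
    have hjav : ((ja : Jty n m) : ℕ) = n + ((π ka : ℕ) + 1) := rfl
    have hjbv : ((jb : Jty n m) : ℕ) = n + ((π kb : ℕ) + 1) := rfl
    set a0 := (π ka : ℕ) + 1 with ha0
    set b0 := (π kb : ℕ) + 1 with hb0
    have hga : ∀ y, gd n H0 f0 f (n + a0) y = ENNReal.ofReal (f0 y) := by
      intro y
      unfold gd
      rw [if_pos (Or.inr (by rw [show n + a0 - n = a0 by omega]; exact hnull))]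
    by_cases hbH : b0 ∈ H0
    · have hgb : ∀ y, gd n H0 f0 f (n + b0) y = ENNReal.ofReal (f0 y) := by
        intro y
        unfold gd
        rw [if_pos (Or.inr (by rw [show n + b0 - n = b0 by omega]; exact hbH))]
      rw [hjav, hjbv, hga, hga, hgb, hgb]
    · have hgb : ∀ y, gd n H0 f0 f (n + b0) y = ENNReal.ofReal (f b0 y) := by
        intro y
        unfold gd
        rw [if_neg (by
          push_neg
          refine ⟨by omega, ?_⟩
          rw [show n + b0 - n = b0 by omega]
          exact hbH)]
        rw [show n + b0 - n = b0 by omega]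
      have hb0m : b0 ∈ Finset.Icc 1 m := by
        have := (π kb).isLt
        simp only [Finset.mem_Icc]
        omega
      have mlr := hMLR b0 hb0m hbH (x jb) (x ja) hlt.le
      rw [hjav, hjbv, hga, hga, hgb, hgb]
      rw [← ENNReal.ofReal_mul (hf0nn _), ← ENNReal.ofReal_mul (hfnn _ _)]
      refine ENNReal.ofReal_le_ofReal ?_
      calc f0 (x ja) * f b0 (x jb) = f b0 (x jb) * f0 (x ja) := mul_comm _ _
        _ ≤ f b0 (x ja) * f0 (x jb) := mlr
  calc Measure.map (fun ω (j : Jty n m) => S ω (j : ℕ)) μ (Eset n m π B)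
      = Measure.pi ν (Eset n m π B) := by rw [hρ]
    _ = ∫⁻ x in Eset n m π B, ∏ j : Jty n m, gd n H0 f0 f (j : ℕ) (x j)
          ∂(Measure.pi (fun _ : Jty n m => (volume : Measure ℝ))) := by
        rw [hpi1, withDensity_apply _ (measurableSet_Eset n m π hB)]
    _ ≤ ∫⁻ x in Eset n m π B, ∏ j : Jty n m, gd n H0 f0 f ((es j : Jty n m) : ℕ) (x j)
          ∂(Measure.pi (fun _ : Jty n m => (volume : Measure ℝ))) := by
        refine setLIntegral_mono (Finset.measurable_prod _
          (fun j _ => (hgmeas (es j)).comp (measurable_pi_apply j))) hpoint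
    _ = Measure.pi (fun j => ν (es j)) (Eset n m π B) := by
        rw [hpi2, withDensity_apply _ (measurableSet_Eset n m π hB)]
    _ = Measure.pi ν (Eset n m (π * Equiv.swap ka kb) B) := hRHS.symm
    _ = Measure.map (fun ω (j : Jty n m) => S ω (j : ℕ)) μ
          (Eset n m (π * Equiv.swap ka kb) B) := by rw [hρ]

lemma good_decomp {ω : Ω} (hg : SortsTest n m (S ω) (σ ω)) {k : ℕ}
    (hk : k ∈ Finset.Icc 1 m) (B : Set (ℕ → ℝ)) :
    (obsVec n m S σ ω ∈ B ∧ σ ω k ∈ H0)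
      ↔ ∃ π : Equiv.Perm (Fin m), pnat m π k ∈ H0
          ∧ (fun j : Jty n m => S ω (j : ℕ)) ∈ Eset n m π B := by
  obtain ⟨π0, hπ0⟩ := sorts_exists_perm hg
  have hO0 : (fun j : Jty n m => S ω (j : ℕ)) ∈ Oset n m π0 := mem_Oset_of_sorts hg hπ0
  have hobs0 : obsVec n m S σ ω = Phi n m π0 (fun j : Jty n m => S ω (j : ℕ)) :=
    obsVec_eq_Phi n m S σ ω hg π0 hπ0
  constructor
  · rintro ⟨hBm, hH⟩
    refine ⟨π0, by rw [← hπ0 k hk]; exact hH, hO0, ?_⟩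
    show Phi n m π0 (fun j : Jty n m => S ω (j : ℕ)) ∈ B
    rw [← hobs0]
    exact hBm
  · rintro ⟨π, hπH, hOs, hPh⟩
    have hππ : π = π0 := Oset_disjoint hOs hO0
    subst hππ
    refine ⟨?_, by rw [hπ0 k hk]; exact hπH⟩
    rw [hobs0]
    exact hPh

lemma good_mem_Uk {ω : Ω} (hg : SortsTest n m (S ω) (σ ω)) {k : ℕ}
    (hk : k ∈ Finset.Icc 1 m) :
    σ ω k ∈ H0 ↔ ω ∈ Uk n m H0 S k := by
  have hiff := good_decomp (H0 := H0) (σ := σ) hg hk Set.univ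
  constructor
  · intro h
    obtain ⟨π, h1, h2, -⟩ := hiff.mp ⟨trivial, h⟩
    show (fun j : Jty n m => S ω (j : ℕ)) ∈ ⋃ π ∈ Fk m H0 k, Oset n m π
    exact Set.mem_biUnion (show π ∈ Fk m H0 k from
      Finset.mem_filter.mpr ⟨Finset.mem_univ _, h1⟩) h2
  · intro h
    obtain ⟨π, hπ1, hπ2⟩ := Set.mem_iUnion₂.mp h
    have h1 : pnat m π k ∈ H0 := (Finset.mem_filter.mp hπ1).2
    exact (hiff.mpr ⟨π, h1, hπ2, trivial⟩).2

lemma decomp_measure (hS : Measurable S) (hσ : ∀ᵐ ω ∂μ, SortsTest n m (S ω) (σ ω))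
    {k : ℕ} (hk : k ∈ Finset.Icc 1 m) {B : Set (ℕ → ℝ)} (hB : MeasurableSet B) :
    μ (obsVec n m S σ ⁻¹' B ∩ Uk n m H0 S k)
      = ∑ π ∈ Fk m H0 k,
          Measure.map (fun ω (j : Jty n m) => S ω (j : ℕ)) μ (Eset n m π B) := by
  have hae : (obsVec n m S σ ⁻¹' B ∩ Uk n m H0 S k : Set Ω)
      =ᵐ[μ] ⋃ π ∈ Fk m H0 k,
        (fun ω (j : Jty n m) => S ω (j : ℕ)) ⁻¹' (Eset n m π B) := by
    filter_upwards [hσ] with ω hg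
    have hiff : ω ∈ (obsVec n m S σ ⁻¹' B ∩ Uk n m H0 S k : Set Ω)
        ↔ ω ∈ ⋃ π ∈ Fk m H0 k,
          (fun ω (j : Jty n m) => S ω (j : ℕ)) ⁻¹' (Eset n m π B) := by
      constructor
      · rintro ⟨h1, h2⟩
        obtain ⟨π, hπ1, hπ2⟩ := (good_decomp hg hk B).mp
          ⟨h1, (good_mem_Uk hg hk).mpr h2⟩
        exact Set.mem_biUnion (show π ∈ Fk m H0 k from
          Finset.mem_filter.mpr ⟨Finset.mem_univ _, hπ1⟩) hπ2
      · intro h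
        obtain ⟨π, hπ1, hπ2⟩ := Set.mem_iUnion₂.mp h
        have h1 : pnat m π k ∈ H0 := (Finset.mem_filter.mp hπ1).2
        obtain ⟨hBm, hH⟩ := (good_decomp hg hk B).mpr ⟨π, h1, hπ2⟩
        exact ⟨hBm, (good_mem_Uk hg hk).mp hH⟩
    exact propext hiff
  rw [measure_congr hae]
  rw [measure_biUnion_finset ?_ (fun π _ => (measurable_Xvec hS) (measurableSet_Eset n m π hB))]
  · refine Finset.sum_congr rfl (fun π _ => ?_)
    exact (Measure.map_apply (measurable_Xvec hS) (measurableSet_Eset n m π hB)).symm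
  · intro π hπ π' hπ' hne
    refine Set.disjoint_left.mpr (fun ω hω hω' => ?_)
    exact hne (Oset_disjoint hω.1 hω'.1)

lemma key_ineq (hn : 1 ≤ n) (hS : Measurable S) (hH0 : H0 ⊆ Finset.Icc 1 m)
    (hf0meas : Measurable f0) (hf0nn : ∀ x, 0 ≤ f0 x)
    (hfmeas : ∀ i, Measurable (f i)) (hfnn : ∀ i x, 0 ≤ f i x)
    (hindep : ProbabilityTheory.iIndepFun
      (fun j : (Finset.Icc 1 (n + m) : Finset ℕ) => fun ω => S ω (j : ℕ)) μ)
    (hlaw0 : ∀ j ∈ NullIdx n H0, Measure.map (fun ω => S ω j) μ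
      = volume.withDensity (fun x => ENNReal.ofReal (f0 x)))
    (hlaw1 : ∀ i ∈ Finset.Icc 1 m, i ∉ H0 → Measure.map (fun ω => S ω (n + i)) μ
      = volume.withDensity (fun x => ENNReal.ofReal (f i x)))
    (hMLR : ∀ i ∈ Finset.Icc 1 m, i ∉ H0 →
      ∀ x y : ℝ, x ≤ y → f i x * f0 y ≤ f i y * f0 x)
    (hσ : ∀ᵐ ω ∂μ, SortsTest n m (S ω) (σ ω))
    {k k' : ℕ} (hk : k ∈ Finset.Icc 1 m) (hk' : k' ∈ Finset.Icc 1 m) (hkk : k ≤ k')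
    {B : Set (ℕ → ℝ)} (hB : MeasurableSet B) :
    μ (obsVec n m S σ ⁻¹' B ∩ Uk n m H0 S k)
      ≤ μ (obsVec n m S σ ⁻¹' B ∩ Uk n m H0 S k') := by
  rcases eq_or_lt_of_le hkk with rfl | hlt
  · exact le_refl _
  have hkm := Finset.mem_Icc.mp hk
  have hk'm := Finset.mem_Icc.mp hk'
  set ka : Fin m := ⟨k - 1, by omega⟩ with hka
  set kb : Fin m := ⟨k' - 1, by omega⟩ with hkb
  have hkakb : ka < kb := by
    show (k - 1 : ℕ) < k' - 1
    omega
  set τ := Equiv.swap ka kb with hτ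
  rw [decomp_measure hS hσ hk hB, decomp_measure hS hσ hk' hB]
  have step1 : ∑ π ∈ Fk m H0 k,
        Measure.map (fun ω (j : Jty n m) => S ω (j : ℕ)) μ (Eset n m π B)
      ≤ ∑ π ∈ Fk m H0 k,
        Measure.map (fun ω (j : Jty n m) => S ω (j : ℕ)) μ (Eset n m (π * τ) B) := by
    refine Finset.sum_le_sum (fun π hπ => ?_)
    have h1 : pnat m π k ∈ H0 := (Finset.mem_filter.mp hπ).2
    rw [pnat, dif_pos hk] at h1
    exact swap_ineq hn hS hH0 hf0meas hf0nn hfmeas hfnn hindep hlaw0 hlaw1 hMLR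
      π ka kb hkakb h1 hB
  refine step1.trans (le_of_eq ?_)
  refine Finset.sum_nbij' (fun π => π * τ) (fun π => π * τ) ?_ ?_ ?_ ?_ ?_
  · intro π hπ
    have h1 : pnat m π k ∈ H0 := (Finset.mem_filter.mp hπ).2
    refine Finset.mem_filter.mpr ⟨Finset.mem_univ _, ?_⟩
    rw [pnat, dif_pos hk']
    rw [pnat, dif_pos hk] at h1
    have : (π * τ) ⟨k' - 1, by omega⟩ = π ka := by
      rw [Equiv.Perm.mul_apply]
      have : (⟨k' - 1, by omega⟩ : Fin m) = kb := rfl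
      rw [this, hτ, Equiv.swap_apply_right]
    rw [this]
    exact h1
  · intro π hπ
    have h1 : pnat m π k' ∈ H0 := (Finset.mem_filter.mp hπ).2
    refine Finset.mem_filter.mpr ⟨Finset.mem_univ _, ?_⟩
    rw [pnat, dif_pos hk'] at h1
    rw [pnat, dif_pos hk]
    have : (π * τ) ⟨k - 1, by omega⟩ = π kb := by
      rw [Equiv.Perm.mul_apply]
      have : (⟨k - 1, by omega⟩ : Fin m) = ka := rfl
      rw [this, hτ, Equiv.swap_apply_left]
    rw [this]
    exact h1
  · intro π _
    show π * τ * τ = π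
    rw [mul_assoc, hτ, Equiv.swap_mul_self, mul_one]
  · intro π _
    show π * τ * τ = π
    rw [mul_assoc, hτ, Equiv.swap_mul_self, mul_one]
  · intro π _
    rfl

end Main

end CNDaux

/-- Theorem 4.1 of the paper: under Assumption (A2), the
conditional probability that the `k`-th largest test score is a null, given the
calibration scores and the ordered test scores, is a.s. nondecreasing in `k`;
consequently, for any top-`k̂` procedure with `k̂` measurable with respect to
that σ-algebra, `bFDR(R) = E[max_{0 ≤ k ≤ |R|} P(σ(k) ∈ H0 | …)]` (the term for
`k = 0` being `0`). -/
theorem condProb_monotone_and_bFDR_repr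
    {Ω : Type*} [MeasurableSpace Ω] (μ : Measure Ω) [IsProbabilityMeasure μ]
    (n m : ℕ) (hn : 1 ≤ n) (hm : 1 ≤ m)
    (S : Ω → ℕ → ℝ) (hS : Measurable S)
    (H0 : Finset ℕ) (hH0 : H0 ⊆ Finset.Icc 1 m)
    (f0 : ℝ → ℝ) (hf0meas : Measurable f0) (hf0nn : ∀ x, 0 ≤ f0 x)
    (f : ℕ → ℝ → ℝ) (hfmeas : ∀ i, Measurable (f i)) (hfnn : ∀ i x, 0 ≤ f i x)
    (hindep : ProbabilityTheory.iIndepFun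
      (fun j : (Finset.Icc 1 (n + m) : Finset ℕ) => fun ω => S ω (j : ℕ)) μ)
    (hlaw0 : ∀ j ∈ NullIdx n H0, Measure.map (fun ω => S ω j) μ
      = volume.withDensity (fun x => ENNReal.ofReal (f0 x)))
    (hlaw1 : ∀ i ∈ Finset.Icc 1 m, i ∉ H0 → Measure.map (fun ω => S ω (n + i)) μ
      = volume.withDensity (fun x => ENNReal.ofReal (f i x)))
    (hMLR : ∀ i ∈ Finset.Icc 1 m, i ∉ H0 →
      ∀ x y : ℝ, x ≤ y → f i x * f0 y ≤ f i y * f0 x)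
    (σ : Ω → ℕ → ℕ) (hσ : ∀ᵐ ω ∂μ, SortsTest n m (S ω) (σ ω))
    (hobs : Measurable (obsVec n m S σ)) :
    (∀ k k' : ℕ, 1 ≤ k → k ≤ k' → k' ≤ m →
      ∀ᵐ ω ∂μ,
        (μ[(fun ω' => if σ ω' k ∈ H0 then (1 : ℝ) else 0) | obsAlg n m S σ]) ω
          ≤ (μ[(fun ω' => if σ ω' k' ∈ H0 then (1 : ℝ) else 0) | obsAlg n m S σ]) ω)
      ∧
    (∀ khat : Ω → ℕ, Measurable[obsAlg n m S σ] khat → (∀ ω, khat ω ≤ m) →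
      (μ {ω | 1 ≤ khat ω ∧ σ ω (khat ω) ∈ H0}).toReal
        = ∫ ω, (Finset.range ((rejSet n m (S ω) (σ ω) (khat ω)).card + 1)).sup'
            Finset.nonempty_range_add_one
            (fun k => if k = 0 then 0 else
              (μ[(fun ω' => if σ ω' k ∈ H0 then (1 : ℝ) else 0) | obsAlg n m S σ]) ω)
            ∂μ) := by
  classical
  have hmle : obsAlg n m S σ ≤ (inferInstance : MeasurableSpace Ω) := hobs.comap_le
  set hfun : ℕ → Ω → ℝ := fun k ω' => if σ ω' k ∈ H0 then (1 : ℝ) else 0 with hhfun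
  have haeind : ∀ k ∈ Finset.Icc 1 m,
      hfun k =ᵐ[μ] (CNDaux.Uk n m H0 S k).indicator (fun _ => (1 : ℝ)) := by
    intro k hk
    filter_upwards [hσ] with ω hg
    by_cases h : σ ω k ∈ H0
    · rw [show hfun k ω = 1 from if_pos h,
        Set.indicator_of_mem ((CNDaux.good_mem_Uk hg hk).mp h) _]
    · rw [show hfun k ω = 0 from if_neg h,
        Set.indicator_of_notMem (fun hmem => h ((CNDaux.good_mem_Uk hg hk).mpr hmem)) _]
  have hint : ∀ k ∈ Finset.Icc 1 m, Integrable (hfun k) μ := by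
    intro k hk
    exact ((integrable_const (1 : ℝ)).indicator
      (CNDaux.measurableSet_Uk hS k)).congr ((haeind k hk).symm)
  have hsetint : ∀ k ∈ Finset.Icc 1 m, ∀ s : Set Ω, MeasurableSet s →
      ∫ x in s, hfun k x ∂μ = (μ (CNDaux.Uk n m H0 S k ∩ s)).toReal := by
    intro k hk s hs
    calc ∫ x in s, hfun k x ∂μ
        = ∫ x in s, (CNDaux.Uk n m H0 S k).indicator (fun _ => (1 : ℝ)) x ∂μ :=
          setIntegral_congr_ae hs ((haeind k hk).mono (fun ω h _ => h))
      _ = ((μ.restrict s) (CNDaux.Uk n m H0 S k)).toReal • (1 : ℝ) :=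
          integral_indicator_const (1 : ℝ) (CNDaux.measurableSet_Uk hS k)
      _ = (μ (CNDaux.Uk n m H0 S k ∩ s)).toReal := by
          rw [Measure.restrict_apply (CNDaux.measurableSet_Uk hS k), smul_eq_mul, mul_one]
  have part1 : ∀ k k' : ℕ, 1 ≤ k → k ≤ k' → k' ≤ m →
      ∀ᵐ ω ∂μ, (μ[hfun k | obsAlg n m S σ]) ω ≤ (μ[hfun k' | obsAlg n m S σ]) ω := by
    intro k k' h1 h2 h3
    have hk : k ∈ Finset.Icc 1 m := Finset.mem_Icc.mpr ⟨h1, h2.trans h3⟩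
    have hk' : k' ∈ Finset.Icc 1 m := Finset.mem_Icc.mpr ⟨h1.trans h2, h3⟩
    refine CNDaux.condexp_mono_of_setIntegral hmle μ (hint k hk) (hint k' hk') ?_
    intro s hsG
    have hsG' : MeasurableSet[MeasurableSpace.comap (obsVec n m S σ) inferInstance] s := hsG
    obtain ⟨B, hB, rfl⟩ := MeasurableSpace.measurableSet_comap.mp hsG'
    have hs0 : MeasurableSet (obsVec n m S σ ⁻¹' B) := hobs hB
    rw [hsetint k hk _ hs0, hsetint k' hk' _ hs0]
    refine (ENNReal.toReal_le_toReal (measure_ne_top μ _) (measure_ne_top μ _)).mpr ?_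
    rw [Set.inter_comm, Set.inter_comm (CNDaux.Uk n m H0 S k')]
    exact CNDaux.key_ineq hn hS hH0 hf0meas hf0nn hfmeas hfnn hindep hlaw0 hlaw1 hMLR hσ
      hk hk' h2 hB
  constructor
  · intro k k' h1 h2 h3
    exact part1 k k' h1 h2 h3
  · intro khat hkhat hkhatle
    have hsetG : ∀ k : ℕ, MeasurableSet[obsAlg n m S σ] {ω | khat ω = k} := fun k =>
      hkhat (measurableSet_singleton k)
    have hset0 : ∀ k : ℕ, MeasurableSet {ω | khat ω = k} := fun k => hmle _ (hsetG k)
    have hLHSae : ({ω | 1 ≤ khat ω ∧ σ ω (khat ω) ∈ H0} : Set Ω)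
        =ᵐ[μ] ⋃ k ∈ Finset.Icc 1 m, ({ω | khat ω = k} ∩ CNDaux.Uk n m H0 S k) := by
      filter_upwards [hσ] with ω hg
      refine propext ⟨?_, ?_⟩
      · rintro ⟨h1, h2⟩
        have hKm : khat ω ∈ Finset.Icc 1 m := Finset.mem_Icc.mpr ⟨h1, hkhatle ω⟩
        exact Set.mem_biUnion hKm ⟨rfl, (CNDaux.good_mem_Uk hg hKm).mp h2⟩
      · intro h
        obtain ⟨k, hk, hmem⟩ := Set.mem_iUnion₂.mp h
        have heq : khat ω = k := hmem.1
        have hk1 := Finset.mem_Icc.mp hk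
        refine ⟨by omega, ?_⟩
        rw [heq]
        exact (CNDaux.good_mem_Uk hg hk).mpr hmem.2
    have hdisj : (↑(Finset.Icc 1 m) : Set ℕ).PairwiseDisjoint
        (fun k => {ω | khat ω = k} ∩ CNDaux.Uk n m H0 S k) := by
      intro a _ b _ hab
      refine Set.disjoint_left.mpr (fun ω h1 h2 => hab ?_)
      have e1 : khat ω = a := h1.1
      have e2 : khat ω = b := h2.1
      omega
    have hLHS : μ {ω | 1 ≤ khat ω ∧ σ ω (khat ω) ∈ H0}
        = ∑ k ∈ Finset.Icc 1 m, μ ({ω | khat ω = k} ∩ CNDaux.Uk n m H0 S k) := by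
      rw [measure_congr hLHSae]
      exact measure_biUnion_finset hdisj
        (fun k _ => (hset0 k).inter (CNDaux.measurableSet_Uk hS k))
    have hnonneg : ∀ k : ℕ, ∀ᵐ ω ∂μ, 0 ≤ (μ[hfun k | obsAlg n m S σ]) ω := by
      intro k
      refine condExp_nonneg (ae_of_all μ (fun ω => ?_))
      by_cases h : σ ω k ∈ H0
      · rw [show hfun k ω = 1 from if_pos h]; norm_num
      · rw [show hfun k ω = 0 from if_neg h]
        exact le_rfl
    have hmono : ∀ᵐ ω ∂μ, ∀ k k' : ℕ, 1 ≤ k → k ≤ k' → k' ≤ m →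
        (μ[hfun k | obsAlg n m S σ]) ω ≤ (μ[hfun k' | obsAlg n m S σ]) ω := by
      rw [ae_all_iff]
      intro k
      rw [ae_all_iff]
      intro k'
      by_cases hc : 1 ≤ k ∧ k ≤ k' ∧ k' ≤ m
      · filter_upwards [part1 k k' hc.1 hc.2.1 hc.2.2] with ω h h1 h2 h3
        exact h
      · filter_upwards [] with ω h1 h2 h3
        exact absurd ⟨h1, h2, h3⟩ hc
    have hnonneg' : ∀ᵐ ω ∂μ, ∀ k : ℕ, 0 ≤ (μ[hfun k | obsAlg n m S σ]) ω := ae_all_iff.mpr hnonneg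
    have hRHSae : (fun ω => (Finset.range ((rejSet n m (S ω) (σ ω) (khat ω)).card + 1)).sup'
            Finset.nonempty_range_add_one
            (fun k => if k = 0 then 0 else (μ[hfun k | obsAlg n m S σ]) ω))
        =ᵐ[μ] (fun ω => ∑ k ∈ Finset.Icc 1 m,
            ({ω' | khat ω' = k}).indicator (fun ω' => (μ[hfun k | obsAlg n m S σ]) ω') ω) := by
      filter_upwards [hσ, hmono, hnonneg'] with ω hg hmo hnn
      rcases Nat.eq_zero_or_pos (khat ω) with h0 | hpos
      · have hcard : (rejSet n m (S ω) (σ ω) (khat ω)).card = 0 := by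
          rw [h0, rejSet, if_pos rfl]
          exact Finset.card_empty
        rw [hcard]
        have hzero : ∑ k ∈ Finset.Icc 1 m,
            ({ω' | khat ω' = k}).indicator (fun ω' => (μ[hfun k | obsAlg n m S σ]) ω') ω = 0 := by
          refine Finset.sum_eq_zero (fun k hk => ?_)
          have hk1 := Finset.mem_Icc.mp hk
          exact Set.indicator_of_notMem (by
            show ¬ khat ω = k
            omega) _
        rw [hzero]
        simp only [Nat.zero_add, Finset.range_one, Finset.sup'_singleton]
        simp
      · have hKm : khat ω ∈ Finset.Icc 1 m := Finset.mem_Icc.mpr ⟨hpos, hkhatle ω⟩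
        have hcard : (rejSet n m (S ω) (σ ω) (khat ω)).card = khat ω :=
          CNDaux.rejSet_card hg hKm
        rw [hcard]
        have hsum : ∑ k ∈ Finset.Icc 1 m,
            ({ω' | khat ω' = k}).indicator (fun ω' => (μ[hfun k | obsAlg n m S σ]) ω') ω
            = (μ[hfun (khat ω) | obsAlg n m S σ]) ω := by
          have h1 : ∀ b ∈ Finset.Icc 1 m, b ≠ khat ω →
              ({ω' | khat ω' = b}).indicator
                (fun ω' => (μ[hfun b | obsAlg n m S σ]) ω') ω = 0 := by
            intro b _ hb
            refine Set.indicator_of_notMem ?_ _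
            intro hc
            exact hb (Eq.symm hc)
          rw [Finset.sum_eq_single_of_mem (khat ω) hKm h1]
          exact Set.indicator_of_mem
            (show ω ∈ {ω' | khat ω' = khat ω} from rfl) _
        rw [hsum]
        refine le_antisymm (Finset.sup'_le _ _ (fun k hkr => ?_)) ?_
        · rcases Nat.eq_zero_or_pos k with hk0 | hk1
          · rw [hk0, if_pos rfl]
            exact hnn (khat ω)
          · rw [if_neg (by omega)]
            refine hmo k (khat ω) hk1 ?_ (hkhatle ω)
            have := Finset.mem_range.mp hkr
            omega
        · have hKmem : khat ω ∈ Finset.range (khat ω + 1) := Finset.self_mem_range_succ _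
          have hle := Finset.le_sup' (fun k => if k = 0 then (0 : ℝ)
            else (μ[hfun k | obsAlg n m S σ]) ω) hKmem
          rw [if_neg (by omega)] at hle
          exact hle
    have hintg : ∀ k ∈ Finset.Icc 1 m, Integrable
        (({ω' | khat ω' = k}).indicator (fun ω' => (μ[hfun k | obsAlg n m S σ]) ω')) μ :=
      fun k _ => integrable_condExp.indicator (hset0 k)
    calc (μ {ω | 1 ≤ khat ω ∧ σ ω (khat ω) ∈ H0}).toReal
        = ∑ k ∈ Finset.Icc 1 m, (μ ({ω | khat ω = k} ∩ CNDaux.Uk n m H0 S k)).toReal := by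
          rw [hLHS, ENNReal.toReal_sum (fun k _ => measure_ne_top μ _)]
      _ = ∑ k ∈ Finset.Icc 1 m, ∫ ω, ({ω' | khat ω' = k}).indicator
            (fun ω' => (μ[hfun k | obsAlg n m S σ]) ω') ω ∂μ := by
          refine Finset.sum_congr rfl (fun k hk => ?_)
          rw [integral_indicator (hset0 k),
            setIntegral_condExp hmle (hint k hk) (hsetG k),
            hsetint k hk _ (hset0 k), Set.inter_comm]
      _ = ∫ ω, ∑ k ∈ Finset.Icc 1 m, ({ω' | khat ω' = k}).indicator
            (fun ω' => (μ[hfun k | obsAlg n m S σ]) ω') ω ∂μ := (integral_finset_sum _ hintg).symm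
      _ = ∫ ω, (Finset.range ((rejSet n m (S ω) (σ ω) (khat ω)).card + 1)).sup'
            Finset.nonempty_range_add_one (fun k => if k = 0 then 0
              else (μ[hfun k | obsAlg n m S σ]) ω) ∂μ := (integral_congr_ae hRHSae).symm

end
end

section
/- Let m ≥ 2, let {1,…,m} be partitioned into disjoint sets H0 and H1, let f0 : ℝ → [0,∞) and, for each j ∈ H1, f_j : ℝ → [0,∞) satisfy the monotone likelihood ratio condition f_j(x)·f0(y) ≤ f_j(y)·f0(x) for all x ≤ y. Let x_1 ≥ x_2 ≥ ⋯ ≥ x_m be real numbers, and for each permutation τ of {1,…,m} set w(τ) = (Π_{j∈H0} f0(x_{τ⁻¹(j)}))·(Π_{j∈H1} f_j(x_{τ⁻¹(j)})). Then for every k ∈ {1,…,m−1}: Σ over permutations τ with τ(k+1) ∈ H0 of w(τ) ≥ Σ over permutations τ with τ(k) ∈ H0 of w(τ). -/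
open MeasureTheory Finset

noncomputable section

attribute [local instance] Classical.propDecidable

theorem Equiv.Perm.apply_inv_self {α : Type*} (f : Equiv.Perm α) (x : α) : f (f⁻¹ x) = x :=
  Equiv.apply_symm_apply f x

theorem Equiv.Perm.inv_apply_self {α : Type*} (f : Equiv.Perm α) (x : α) : f⁻¹ (f x) = x :=
  Equiv.symm_apply_apply f x

theorem perm_weight_swap_aux
    (m : ℕ) (H0 : Finset (Fin m))
    (f0 : ℝ → ℝ) (hf0nn : ∀ x, 0 ≤ f0 x)
    (f : Fin m → ℝ → ℝ) (hfnn : ∀ j x, 0 ≤ f j x)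
    (hMLR : ∀ j ∉ H0, ∀ x y : ℝ, x ≤ y → f j x * f0 y ≤ f j y * f0 x)
    (x : Fin m → ℝ) (a b : Fin m) (hab : a ≠ b) (hxba : x b ≤ x a) :
    ∑ τ ∈ Finset.univ.filter (fun τ : Equiv.Perm (Fin m) => τ a ∈ H0),
      ((∏ j ∈ H0, f0 (x (τ⁻¹ j))) * ∏ j ∈ H0ᶜ, f j (x (τ⁻¹ j)))
      ≤
    ∑ τ ∈ Finset.univ.filter (fun τ : Equiv.Perm (Fin m) => τ b ∈ H0),
      ((∏ j ∈ H0, f0 (x (τ⁻¹ j))) * ∏ j ∈ H0ᶜ, f j (x (τ⁻¹ j))) := by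
  classical
  set w : Equiv.Perm (Fin m) → ℝ :=
    fun τ => (∏ j ∈ H0, f0 (x (τ⁻¹ j))) * ∏ j ∈ H0ᶜ, f j (x (τ⁻¹ j)) with hwdef
  -- pointwise key inequality
  have key : ∀ τ : Equiv.Perm (Fin m), τ a ∈ H0 → τ b ∉ H0 →
      w τ ≤ w (τ * Equiv.swap a b) := by
    intro τ h0 h1
    have hinv : ∀ j, (τ * Equiv.swap a b)⁻¹ j = Equiv.swap a b (τ⁻¹ j) := by
      intro j
      simp [mul_inv_rev, Equiv.swap_inv, Equiv.Perm.mul_apply]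
    have hfix0 : ∀ j ∈ H0.erase (τ a), Equiv.swap a b (τ⁻¹ j) = τ⁻¹ j := by
      intro j hj
      rw [Finset.mem_erase] at hj
      refine Equiv.swap_apply_of_ne_of_ne ?_ ?_
      · exact fun h => hj.1 (by rw [← h, Equiv.Perm.apply_inv_self])
      · intro h
        apply h1
        rw [← Equiv.Perm.apply_inv_self τ j, h] at hj
        exact hj.2
    have hfix1 : ∀ j ∈ H0ᶜ.erase (τ b), Equiv.swap a b (τ⁻¹ j) = τ⁻¹ j := by
      intro j hj
      rw [Finset.mem_erase] at hj
      refine Equiv.swap_apply_of_ne_of_ne ?_ ?_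
      · intro h
        have : j = τ a := by rw [← h, Equiv.Perm.apply_inv_self]
        rw [Finset.mem_compl] at hj
        exact hj.2 (this ▸ h0)
      · exact fun h => hj.1 (by rw [← h, Equiv.Perm.apply_inv_self])
    have hb' : τ b ∈ H0ᶜ := Finset.mem_compl.mpr h1
    have e0 : (∏ j ∈ H0, f0 (x (τ⁻¹ j)))
        = f0 (x a) * ∏ j ∈ H0.erase (τ a), f0 (x (τ⁻¹ j)) := by
      rw [← Finset.mul_prod_erase H0 _ h0, Equiv.Perm.inv_apply_self]
    have e1 : (∏ j ∈ H0ᶜ, f j (x (τ⁻¹ j)))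
        = f (τ b) (x b) * ∏ j ∈ H0ᶜ.erase (τ b), f j (x (τ⁻¹ j)) := by
      rw [← Finset.mul_prod_erase H0ᶜ _ hb', Equiv.Perm.inv_apply_self]
    have e0' : (∏ j ∈ H0, f0 (x ((τ * Equiv.swap a b)⁻¹ j)))
        = f0 (x b) * ∏ j ∈ H0.erase (τ a), f0 (x (τ⁻¹ j)) := by
      rw [← Finset.mul_prod_erase H0 _ h0]
      congr 1
      · rw [hinv, Equiv.Perm.inv_apply_self, Equiv.swap_apply_left]
      · exact Finset.prod_congr rfl fun j hj => by rw [hinv, hfix0 j hj]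
    have e1' : (∏ j ∈ H0ᶜ, f j (x ((τ * Equiv.swap a b)⁻¹ j)))
        = f (τ b) (x a) * ∏ j ∈ H0ᶜ.erase (τ b), f j (x (τ⁻¹ j)) := by
      rw [← Finset.mul_prod_erase H0ᶜ _ hb']
      congr 1
      · rw [hinv, Equiv.Perm.inv_apply_self, Equiv.swap_apply_right]
      · exact Finset.prod_congr rfl fun j hj => by rw [hinv, hfix1 j hj]
    have hA : (0:ℝ) ≤ ∏ j ∈ H0.erase (τ a), f0 (x (τ⁻¹ j)) :=
      Finset.prod_nonneg fun j _ => hf0nn _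
    have hB : (0:ℝ) ≤ ∏ j ∈ H0ᶜ.erase (τ b), f j (x (τ⁻¹ j)) :=
      Finset.prod_nonneg fun j _ => hfnn _ _
    have hmlr := mul_le_mul_of_nonneg_right
      (hMLR (τ b) h1 (x b) (x a) hxba) (mul_nonneg hA hB)
    simp only [hwdef]
    rw [e0, e1, e0', e1']
    calc f0 (x a) * (∏ j ∈ H0.erase (τ a), f0 (x (τ⁻¹ j)))
          * (f (τ b) (x b) * ∏ j ∈ H0ᶜ.erase (τ b), f j (x (τ⁻¹ j)))
        = (f (τ b) (x b) * f0 (x a)) *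
          ((∏ j ∈ H0.erase (τ a), f0 (x (τ⁻¹ j))) *
            ∏ j ∈ H0ᶜ.erase (τ b), f j (x (τ⁻¹ j))) := by ring
      _ ≤ (f (τ b) (x a) * f0 (x b)) *
          ((∏ j ∈ H0.erase (τ a), f0 (x (τ⁻¹ j))) *
            ∏ j ∈ H0ᶜ.erase (τ b), f j (x (τ⁻¹ j))) := hmlr
      _ = f0 (x b) * (∏ j ∈ H0.erase (τ a), f0 (x (τ⁻¹ j)))
          * (f (τ b) (x a) * ∏ j ∈ H0ᶜ.erase (τ b), f j (x (τ⁻¹ j))) := by ring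
  -- split both sums
  have hsplitL := Finset.sum_filter_add_sum_filter_not
    (Finset.univ.filter (fun τ : Equiv.Perm (Fin m) => τ a ∈ H0))
    (fun τ => τ b ∈ H0) w
  have hsplitR := Finset.sum_filter_add_sum_filter_not
    (Finset.univ.filter (fun τ : Equiv.Perm (Fin m) => τ b ∈ H0))
    (fun τ => τ a ∈ H0) w
  rw [← hsplitL, ← hsplitR]
  have hcomm :
      ((Finset.univ.filter (fun τ : Equiv.Perm (Fin m) => τ a ∈ H0)).filter
        (fun τ => τ b ∈ H0))
      = ((Finset.univ.filter (fun τ : Equiv.Perm (Fin m) => τ b ∈ H0)).filter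
        (fun τ => τ a ∈ H0)) := by
    simp [Finset.filter_filter, and_comm]
  rw [hcomm]
  refine add_le_add_right ?_ _
  -- reindex the RHS by τ ↦ τ * swap a b
  have hre :
      ∑ τ ∈ (Finset.univ.filter (fun τ : Equiv.Perm (Fin m) => τ b ∈ H0)).filter
          (fun τ => ¬ τ a ∈ H0), w τ
      = ∑ τ ∈ (Finset.univ.filter (fun τ : Equiv.Perm (Fin m) => τ a ∈ H0)).filter
          (fun τ => ¬ τ b ∈ H0), w (τ * Equiv.swap a b) := by
    refine (Finset.sum_nbij' (i := fun τ => τ * Equiv.swap a b)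
      (j := fun τ => τ * Equiv.swap a b) ?_ ?_ ?_ ?_ ?_).symm
    · intro τ hτ
      simp only [Finset.mem_filter, Finset.mem_univ, true_and] at hτ ⊢
      simpa [Equiv.Perm.mul_apply] using And.intro hτ.1 hτ.2
    · intro τ hτ
      simp only [Finset.mem_filter, Finset.mem_univ, true_and] at hτ ⊢
      simpa [Equiv.Perm.mul_apply] using And.intro hτ.1 hτ.2
    · intro τ _
      simp [mul_assoc, Equiv.swap_mul_self]
    · intro τ _
      simp [mul_assoc, Equiv.swap_mul_self]
    · intro τ _
      rfl
  rw [hre]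
  refine Finset.sum_le_sum ?_
  intro τ hτ
  simp only [Finset.mem_filter, Finset.mem_univ, true_and] at hτ
  exact key τ hτ.1 hτ.2

/-- deterministic core of Theorem 4.1 of the paper: for
weights `w(τ) = ∏_{j∈H0} f0(x_{τ⁻¹(j)}) · ∏_{j∉H0} f_j(x_{τ⁻¹(j)})` built from
nonnegative densities with monotone likelihood ratio, and nonincreasing values
`x_1 ≥ ⋯ ≥ x_m`, the total weight of the permutations assigning a null to
position `k+1` is at least the total weight of those assigning a null to
position `k`.  (Positions `1,…,m` are encoded by `Fin m`, position `k`
corresponding to `⟨k-1, _⟩ : Fin m`.) -/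
theorem perm_weight_monotone
    (m : ℕ) (hm : 2 ≤ m) (H0 : Finset (Fin m))
    (f0 : ℝ → ℝ) (hf0nn : ∀ x, 0 ≤ f0 x)
    (f : Fin m → ℝ → ℝ) (hfnn : ∀ j x, 0 ≤ f j x)
    (hMLR : ∀ j ∉ H0, ∀ x y : ℝ, x ≤ y → f j x * f0 y ≤ f j y * f0 x)
    (x : Fin m → ℝ) (hx : ∀ a b : Fin m, a ≤ b → x b ≤ x a)
    (k : ℕ) (hk1 : 1 ≤ k) (hkm : k < m) :
    ∑ τ ∈ Finset.univ.filter
        (fun τ : Equiv.Perm (Fin m) => τ ⟨k - 1, by omega⟩ ∈ H0),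
      ((∏ j ∈ H0, f0 (x (τ⁻¹ j))) * ∏ j ∈ H0ᶜ, f j (x (τ⁻¹ j)))
      ≤
    ∑ τ ∈ Finset.univ.filter
        (fun τ : Equiv.Perm (Fin m) => τ ⟨k, hkm⟩ ∈ H0),
      ((∏ j ∈ H0, f0 (x (τ⁻¹ j))) * ∏ j ∈ H0ᶜ, f j (x (τ⁻¹ j))) := by
  exact perm_weight_swap_aux m H0 f0 hf0nn f hfnn hMLR x ⟨k - 1, by omega⟩ ⟨k, hkm⟩
    (Fin.ne_of_val_ne (by simp; omega)) (hx _ _ (Fin.mk_le_mk.mpr (by omega)))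

end
end

section
/- Under Assumption (A1), if the level α ∈ (0,1) satisfies 1/(n+1) ≤ α/m, then the SLG procedure (SL with enforced gap) at level α satisfies bFDR(SLG) ≤ α·m0/m. -/
open MeasureTheory Finset

noncomputable section

attribute [local instance] Classical.propDecidable

/-- The SLG index (SL with enforced gap): equal to `k̂_SL` when `k̂_SL ≥ 1` and
the minimum of the SL objective is separated by at least `1/(n+1)` from its
value at every other point, and `0` otherwise. -/
def khatSLG (n m : ℕ) (α : ℝ) (s : ℕ → ℝ) (σ : ℕ → ℕ) : ℕ :=
  if 1 ≤ khatSL n m α s σ ∧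
      (∀ k ≤ m, k ≠ khatSL n m α s σ →
        pOrd n s σ (khatSL n m α s σ) - α * (khatSL n m α s σ) / m + 1 / (n + 1)
          ≤ pOrd n s σ k - α * k / m)
  then khatSL n m α s σ else 0

/-! ### Auxiliary lemmas on `maxArgmin`, `khatSL`, `khatSLG` -/

lemma maxArgmin_mem (m : ℕ) (f : ℕ → ℝ) :
    maxArgmin m f ∈ {k | k ≤ m ∧ ∀ k' ≤ m, f k ≤ f k'} := by
  have hne : {k | k ≤ m ∧ ∀ k' ≤ m, f k ≤ f k'}.Nonempty := by
    obtain ⟨b, hb, hmin⟩ := Finset.exists_min_image (Finset.range (m+1)) f ⟨0, by simp⟩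
    refine ⟨b, ?_, fun k' hk' => hmin k' (by simp; omega)⟩
    · simp at hb; omega
  have hbdd : BddAbove {k | k ≤ m ∧ ∀ k' ≤ m, f k ≤ f k'} := ⟨m, fun x hx => hx.1⟩
  exact Nat.sSup_mem hne hbdd

lemma maxArgmin_le (m : ℕ) (f : ℕ → ℝ) : maxArgmin m f ≤ m :=
  (maxArgmin_mem m f).1

lemma maxArgmin_isMin (m : ℕ) (f : ℕ → ℝ) :
    ∀ k' ≤ m, f (maxArgmin m f) ≤ f k' :=
  (maxArgmin_mem m f).2

lemma maxArgmin_eq_iff (m : ℕ) (f : ℕ → ℝ) (k : ℕ) :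
    maxArgmin m f = k ↔
      (k ≤ m ∧ (∀ k' ≤ m, f k ≤ f k') ∧
        ∀ k'', k'' ≤ m → (∀ k' ≤ m, f k'' ≤ f k') → k'' ≤ k) := by
  constructor
  · rintro rfl
    refine ⟨maxArgmin_le m f, maxArgmin_isMin m f, fun k'' h1 h2 => ?_⟩
    exact le_csSup ⟨m, fun x hx => hx.1⟩ ⟨h1, h2⟩
  · rintro ⟨h1, h2, h3⟩
    have hmem := maxArgmin_mem m f
    have hle : maxArgmin m f ≤ k := h3 _ hmem.1 hmem.2
    have hge : k ≤ maxArgmin m f := le_csSup ⟨m, fun x hx => hx.1⟩ ⟨h1, h2⟩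
    omega

lemma maxArgmin_congr (m : ℕ) {f₁ f₂ : ℕ → ℝ} (h : ∀ k ≤ m, f₁ k = f₂ k) :
    maxArgmin m f₁ = maxArgmin m f₂ := by
  unfold maxArgmin
  congr 1
  ext k
  constructor
  · rintro ⟨hk, hmin⟩
    exact ⟨hk, fun k' hk' => by rw [← h k hk, ← h k' hk']; exact hmin k' hk'⟩
  · rintro ⟨hk, hmin⟩
    exact ⟨hk, fun k' hk' => by rw [h k hk, h k' hk']; exact hmin k' hk'⟩

lemma pOrd_congr (n m : ℕ) (s : ℕ → ℝ) {σ₁ σ₂ : ℕ → ℕ}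
    (h : ∀ k ≤ m, σ₁ k = σ₂ k) {k : ℕ} (hk : k ≤ m) :
    pOrd n s σ₁ k = pOrd n s σ₂ k := by
  unfold pOrd
  by_cases h0 : k = 0
  · simp [h0]
  · simp only [h0, if_false, h k hk]

lemma khatSL_congr (n m : ℕ) (α : ℝ) (s : ℕ → ℝ) {σ₁ σ₂ : ℕ → ℕ}
    (h : ∀ k ≤ m, σ₁ k = σ₂ k) :
    khatSL n m α s σ₁ = khatSL n m α s σ₂ :=
  maxArgmin_congr m (fun k hk => by rw [pOrd_congr n m s h hk])

lemma khatSLG_congr (n m : ℕ) (α : ℝ) (s : ℕ → ℝ) {σ₁ σ₂ : ℕ → ℕ}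
    (h : ∀ k ≤ m, σ₁ k = σ₂ k) :
    khatSLG n m α s σ₁ = khatSLG n m α s σ₂ := by
  have hSL := khatSL_congr n m α s h
  unfold khatSLG
  rw [hSL]
  have hSLle : khatSL n m α s σ₂ ≤ m := maxArgmin_le _ _
  by_cases hc : 1 ≤ khatSL n m α s σ₂ ∧
      (∀ k ≤ m, k ≠ khatSL n m α s σ₂ →
        pOrd n s σ₁ (khatSL n m α s σ₂) - α * (khatSL n m α s σ₂) / m + 1 / (n + 1)
          ≤ pOrd n s σ₁ k - α * k / m)
  · rw [if_pos hc, if_pos]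
    refine ⟨hc.1, fun k hk hkne => ?_⟩
    rw [← pOrd_congr n m s h hSLle, ← pOrd_congr n m s h hk]
    exact hc.2 k hk hkne
  · rw [if_neg hc, if_neg]
    intro hc2
    exact hc ⟨hc2.1, fun k hk hkne => by
      rw [pOrd_congr n m s h hSLle, pOrd_congr n m s h hk]; exact hc2.2 k hk hkne⟩

lemma SortsTest_congr (n m : ℕ) (s : ℕ → ℝ) {σ₁ σ₂ : ℕ → ℕ}
    (h : ∀ k ≤ m, σ₁ k = σ₂ k) (hST : SortsTest n m s σ₁) : SortsTest n m s σ₂ := by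
  obtain ⟨h0, hbij, hord⟩ := hST
  refine ⟨by rw [← h 0 (Nat.zero_le m)]; exact h0, hbij.congr ?_, ?_⟩
  · intro k hk
    simp only [Finset.coe_Icc, Set.mem_Icc] at hk
    exact h k hk.2
  · intro k hk k' hk' hlt
    simp only [Finset.mem_Icc] at hk hk'
    rw [← h k hk.2, ← h k' hk'.2]
    exact hord k (by simp [Finset.mem_Icc]; omega) k' (by simp [Finset.mem_Icc]; omega) hlt

/-- From `1 ≤ khatSLG`, extract the gap condition for `khatSL`. -/
lemma khatSLG_pos_iff (n m : ℕ) (α : ℝ) (s : ℕ → ℝ) (σ' : ℕ → ℕ)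
    (h1 : 1 ≤ khatSLG n m α s σ') :
    khatSLG n m α s σ' = khatSL n m α s σ' ∧ 1 ≤ khatSL n m α s σ' ∧
      (∀ k ≤ m, k ≠ khatSL n m α s σ' →
        pOrd n s σ' (khatSL n m α s σ') - α * (khatSL n m α s σ') / m + 1 / (n + 1)
          ≤ pOrd n s σ' k - α * k / m) := by
  unfold khatSLG at h1 ⊢
  by_cases hc : 1 ≤ khatSL n m α s σ' ∧
      (∀ k ≤ m, k ≠ khatSL n m α s σ' →
        pOrd n s σ' (khatSL n m α s σ') - α * (khatSL n m α s σ') / m + 1 / (n + 1)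
          ≤ pOrd n s σ' k - α * k / m)
  · exact ⟨if_pos hc, hc.1, hc.2⟩
  · rw [if_neg hc] at h1; omega
/-! ### Measurability -/

lemma measurable_pval (n i' : ℕ) : Measurable fun g : ℕ → ℝ => pval n g i' := by
  unfold pval
  apply Measurable.div _ measurable_const
  apply Measurable.add measurable_const
  have hrw : (fun g : ℕ → ℝ => ((((Finset.Icc 1 n)).filter (fun j => g (n + i') ≤ g j)).card : ℝ))
      = fun g => ∑ j ∈ Finset.Icc 1 n, (if g (n + i') ≤ g j then (1:ℝ) else 0) := by
    funext g
    rw [Finset.card_filter]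
    push_cast
    rfl
  rw [hrw]
  apply Finset.measurable_sum
  intro j _
  exact Measurable.ite (measurableSet_le (measurable_pi_apply _) (measurable_pi_apply _))
    measurable_const measurable_const

lemma measurable_pOrd (n m : ℕ) (c : ℕ → ℕ) (k : ℕ) :
    Measurable fun g : ℕ → ℝ => pOrd n g c k := by
  unfold pOrd
  by_cases h0 : k = 0
  · simp only [h0, if_true]; exact measurable_const
  · simp only [h0, if_false]; exact measurable_pval n (c k)

lemma measurable_obj (n m : ℕ) (α : ℝ) (c : ℕ → ℕ) (k : ℕ) :
    Measurable fun g : ℕ → ℝ => pOrd n g c k - α * k / m :=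
  (measurable_pOrd n m c k).sub measurable_const

lemma measurableSet_khatSL_eq (n m : ℕ) (α : ℝ) (c : ℕ → ℕ) (k : ℕ) :
    MeasurableSet {g : ℕ → ℝ | khatSL n m α g c = k} := by
  by_cases hkm : k ≤ m
  · have hset : {g : ℕ → ℝ | khatSL n m α g c = k} =
        (⋂ (k' : ℕ), ⋂ (_ : k' ≤ m),
          {g : ℕ → ℝ | pOrd n g c k - α * k / m ≤ pOrd n g c k' - α * k' / m}) ∩
        (⋂ (k'' : ℕ), ⋂ (_ : k'' ≤ m),
          if k'' ≤ k then Set.univ else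
            (⋂ (k' : ℕ), ⋂ (_ : k' ≤ m),
              {g : ℕ → ℝ | pOrd n g c k'' - α * k'' / m ≤ pOrd n g c k' - α * k' / m})ᶜ) := by
      ext g
      rw [Set.mem_setOf_eq, khatSL, maxArgmin_eq_iff]
      simp only [Set.mem_inter_iff, Set.mem_iInter, Set.mem_setOf_eq]
      constructor
      · rintro ⟨-, h2, h3⟩
        refine ⟨fun k' hk' => h2 k' hk', fun k'' hk'' => ?_⟩
        by_cases hkk : k'' ≤ k
        · simp [hkk]
        · simp only [hkk, if_false, Set.mem_compl_iff, Set.mem_iInter, Set.mem_setOf_eq]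
          intro hall
          exact hkk (h3 k'' hk'' hall)
      · rintro ⟨h2, h3⟩
        refine ⟨hkm, fun k' hk' => h2 k' hk', fun k'' hk'' hall => ?_⟩
        by_contra hkk
        have := h3 k'' hk''
        simp only [hkk, if_false, Set.mem_compl_iff, Set.mem_iInter, Set.mem_setOf_eq] at this
        exact this hall
    rw [hset]
    apply MeasurableSet.inter
    · exact MeasurableSet.iInter fun k' => MeasurableSet.iInter fun _ =>
        measurableSet_le (measurable_obj n m α c k) (measurable_obj n m α c k')
    · refine MeasurableSet.iInter fun k'' => MeasurableSet.iInter fun _ => ?_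
      by_cases hkk : k'' ≤ k
      · simp only [hkk, if_true]; exact MeasurableSet.univ
      · simp only [hkk, if_false]
        exact (MeasurableSet.iInter fun k' => MeasurableSet.iInter fun _ =>
          measurableSet_le (measurable_obj n m α c k'') (measurable_obj n m α c k')).compl
  · have hset : {g : ℕ → ℝ | khatSL n m α g c = k} = ∅ := by
      ext g
      simp only [Set.mem_setOf_eq, Set.mem_empty_iff_false, iff_false]
      intro h
      exact hkm (h ▸ maxArgmin_le m _)
    rw [hset]; exact MeasurableSet.empty

lemma measurableSet_khatSLG_eq (n m : ℕ) (α : ℝ) (c : ℕ → ℕ) (k : ℕ) (hk1 : 1 ≤ k) :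
    MeasurableSet {g : ℕ → ℝ | khatSLG n m α g c = k} := by
  have hset : {g : ℕ → ℝ | khatSLG n m α g c = k} =
      {g : ℕ → ℝ | khatSL n m α g c = k} ∩
      (⋂ (k' : ℕ), ⋂ (_ : k' ≤ m), ⋂ (_ : k' ≠ k),
        {g : ℕ → ℝ | pOrd n g c k - α * k / m + 1 / (n + 1) ≤ pOrd n g c k' - α * k' / m}) := by
    ext g
    simp only [Set.mem_setOf_eq, Set.mem_inter_iff, Set.mem_iInter]
    constructor
    · intro h
      have hex := khatSLG_pos_iff n m α g c (h ▸ hk1)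
      have hSL : khatSL n m α g c = k := by rw [← hex.1, h]
      refine ⟨hSL, fun k' hk' hne => ?_⟩
      have := hex.2.2 k' hk' (by rw [hSL]; exact hne)
      rwa [hSL] at this
    · rintro ⟨hSL, hgap⟩
      unfold khatSLG
      rw [if_pos]
      · exact hSL
      · rw [hSL]
        exact ⟨hk1, fun k' hk' hne => hgap k' hk' hne⟩
  rw [hset]
  apply (measurableSet_khatSL_eq n m α c k).inter
  refine MeasurableSet.iInter fun k' => MeasurableSet.iInter fun _ =>
    MeasurableSet.iInter fun _ => ?_
  exact measurableSet_le ((measurable_obj n m α c k).add measurable_const)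
    (measurable_obj n m α c k')

lemma measurableSet_SortsTest (n m : ℕ) (c : ℕ → ℕ) :
    MeasurableSet {g : ℕ → ℝ | SortsTest n m g c} := by
  by_cases hc : c 0 = 0 ∧ Set.BijOn c (Finset.Icc 1 m) (Finset.Icc 1 m)
  · have hset : {g : ℕ → ℝ | SortsTest n m g c} =
        ⋂ (k : ℕ), ⋂ (_ : k ∈ Finset.Icc 1 m), ⋂ (k' : ℕ), ⋂ (_ : k' ∈ Finset.Icc 1 m),
          ⋂ (_ : k < k'), {g : ℕ → ℝ | g (n + c k') < g (n + c k)} := by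
      ext g
      simp only [Set.mem_setOf_eq, Set.mem_iInter, SortsTest]
      constructor
      · rintro ⟨-, -, hord⟩
        exact fun k hk k' hk' hlt => hord k hk k' hk' hlt
      · intro hord
        exact ⟨hc.1, hc.2, fun k hk k' hk' hlt => hord k hk k' hk' hlt⟩
    rw [hset]
    exact MeasurableSet.iInter fun k => MeasurableSet.iInter fun _ =>
      MeasurableSet.iInter fun k' => MeasurableSet.iInter fun _ =>
      MeasurableSet.iInter fun _ =>
      measurableSet_lt (measurable_pi_apply _) (measurable_pi_apply _)
  · have hset : {g : ℕ → ℝ | SortsTest n m g c} = ∅ := by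
      ext g
      simp only [Set.mem_setOf_eq, Set.mem_empty_iff_false, iff_false, SortsTest]
      rintro ⟨h1, h2, -⟩
      exact hc ⟨h1, h2⟩
    rw [hset]; exact MeasurableSet.empty

/-- The measurable event on score functions: SLG rejects and the last rejected
test point is `i`. -/
def EvtI (n m : ℕ) (α : ℝ) (i : ℕ) : Set (ℕ → ℝ) :=
  {g | ∃ σ' : ℕ → ℕ, SortsTest n m g σ' ∧ 1 ≤ khatSLG n m α g σ' ∧
    σ' (khatSLG n m α g σ') = i}

lemma EvtI_eq (n m : ℕ) (hm : 1 ≤ m) (α : ℝ) (i : ℕ) :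
    EvtI n m α i =
      ⋃ c ∈ ((Finset.univ : Finset (Fin (m+1) → Fin (m+1))).image
          (fun v => (fun k : ℕ => if h : k < m + 1 then (v ⟨k, h⟩ : ℕ) else 0))),
        ({g : ℕ → ℝ | SortsTest n m g c} ∩
          ⋃ k ∈ Finset.Icc 1 m, if c k = i then {g : ℕ → ℝ | khatSLG n m α g c = k} else ∅) := by
  ext g
  simp only [EvtI, Set.mem_setOf_eq, Set.mem_iUnion, Set.mem_inter_iff, Finset.mem_image,
    Finset.mem_univ, true_and, exists_prop]
  constructor
  · rintro ⟨σ', hST, h1, hσi⟩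
    -- truncate σ'
    have hbd : ∀ k ≤ m, σ' k ≤ m := by
      intro k hk
      rcases Nat.eq_zero_or_pos k with rfl | hk1
      · rw [hST.1]; exact Nat.zero_le m
      · have hkmem : (k : ℕ) ∈ (↑(Finset.Icc 1 m) : Set ℕ) := by
          rw [Finset.coe_Icc]; exact Set.mem_Icc.2 ⟨hk1, hk⟩
        have := hST.2.1.1 hkmem
        rw [Finset.coe_Icc, Set.mem_Icc] at this
        exact this.2
    set c : ℕ → ℕ := fun k => if h : k < m + 1 then σ' k else 0 with hc
    have hagree : ∀ k ≤ m, σ' k = c k := by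
      intro k hk; simp only [hc]; rw [dif_pos (by omega)]
    refine ⟨c, ⟨fun k : Fin (m+1) => ⟨σ' k, by
        have := hbd k (by omega); omega⟩, ?_⟩, ?_, ?_⟩
    · funext k
      simp only [hc]
    · exact SortsTest_congr n m g hagree hST
    · have hkG := khatSLG_congr n m α g hagree
      have h1' : 1 ≤ khatSLG n m α g c := hkG ▸ h1
      have hle : khatSLG n m α g c ≤ m := by
        unfold khatSLG
        split
        · exact maxArgmin_le m _
        · omega
      have hci : c (khatSLG n m α g c) = i := by
        rw [← hagree _ hle, ← hkG]; exact hσi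
      refine ⟨khatSLG n m α g c, by simp only [Finset.mem_Icc]; omega, ?_⟩
      rw [if_pos hci]
      exact rfl
  · rintro ⟨c, ⟨v, rfl⟩, hST, hk⟩
    simp only [Set.mem_iUnion, exists_prop] at hk
    obtain ⟨k, hkm, hkmem⟩ := hk
    simp only [Finset.mem_Icc] at hkm
    by_cases hci : (fun k : ℕ => if h : k < m + 1 then (v ⟨k, h⟩ : ℕ) else 0) k = i
    · rw [if_pos hci] at hkmem
      simp only [Set.mem_setOf_eq] at hkmem
      exact ⟨_, hST, by omega, by rw [hkmem]; exact hci⟩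
    · rw [if_neg hci] at hkmem
      exact absurd hkmem (Set.notMem_empty g)

lemma measurableSet_EvtI (n m : ℕ) (hm : 1 ≤ m) (α : ℝ) (i : ℕ) :
    MeasurableSet (EvtI n m α i) := by
  rw [EvtI_eq n m hm α i]
  refine Finset.measurableSet_biUnion _ fun c _ => ?_
  refine (measurableSet_SortsTest n m c).inter ?_
  refine Finset.measurableSet_biUnion _ fun k hk => ?_
  simp only [Finset.mem_Icc] at hk
  by_cases hci : c k = i
  · rw [if_pos hci]; exact measurableSet_khatSLG_eq n m α c k hk.1
  · rw [if_neg hci]; exact MeasurableSet.empty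
/-! ### Combinatorial core: setup -/

/-- Indices of the "pool": calibration indices together with `n+i`. -/
def poolJ (n i : ℕ) : Finset ℕ := insert (n + i) (Finset.Icc 1 n)

/-- Rank (from the top) of `s j` within the pool values. -/
def rnk (n i : ℕ) (s : ℕ → ℝ) (j : ℕ) : ℕ :=
  ((poolJ n i).filter (fun x => s j ≤ s x)).card

/-- Number of pool values above the test value `s (n+b)`. -/
def Qc (n i : ℕ) (s : ℕ → ℝ) (b : ℕ) : ℕ :=
  ((poolJ n i).filter (fun y => s (n + b) ≤ s y)).card

/-- Rank of test point `b` among the test points other than `i`. -/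
def oRk (n m i : ℕ) (s : ℕ → ℝ) (b : ℕ) : ℕ :=
  (((Finset.Icc 1 m).erase i).filter (fun b' => s (n + b) ≤ s (n + b'))).card

/-- `1 +` number of test points (other than `i`) whose score is at least `s j`. -/
def Kv (n m i : ℕ) (s : ℕ → ℝ) (j : ℕ) : ℕ :=
  1 + (((Finset.Icc 1 m).erase i).filter (fun b => s j ≤ s (n + b))).card

lemma card_poolJ (n i : ℕ) (hi1 : 1 ≤ i) : (poolJ n i).card = n + 1 := by
  rw [poolJ, Finset.card_insert_of_notMem (by simp [Finset.mem_Icc]; omega),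
    Nat.card_Icc]
  omega

lemma poolJ_subset (n m i : ℕ) (hi : i ∈ Finset.Icc 1 m) :
    poolJ n i ⊆ Finset.Icc 1 (n + m) := by
  simp only [Finset.mem_Icc] at hi
  intro x hx
  rcases Finset.mem_insert.1 hx with rfl | hx
  · simp [Finset.mem_Icc]; omega
  · simp only [Finset.mem_Icc] at hx ⊢; omega

lemma testIdx_mem (n m b : ℕ) (hb : b ∈ Finset.Icc 1 m) :
    n + b ∈ Finset.Icc 1 (n + m) := by
  simp only [Finset.mem_Icc] at hb ⊢; omega

lemma testIdx_ne_pool (n m i j b : ℕ) (hj : j ∈ poolJ n i)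
    (hb : b ∈ (Finset.Icc 1 m).erase i) : n + b ≠ j := by
  have hb1 : b ≠ i ∧ (1 ≤ b ∧ b ≤ m) := by
    refine ⟨Finset.ne_of_mem_erase hb, ?_⟩
    have := Finset.mem_of_mem_erase hb
    simpa [Finset.mem_Icc] using this
  rcases Finset.mem_insert.1 hj with rfl | hj
  · omega
  · simp only [Finset.mem_Icc] at hj
    omega

/-- The swap `j ↔ n+i` maps calibration indices onto the pool minus `j`. -/
lemma swap_calib_image (n m i j : ℕ) (hi : i ∈ Finset.Icc 1 m) (hj : j ∈ poolJ n i) :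
    ∀ x ∈ Finset.Icc 1 n, Equiv.swap j (n + i) x ∈ (poolJ n i).erase j := by
  simp only [Finset.mem_Icc] at hi
  intro x hx
  have hxI : 1 ≤ x ∧ x ≤ n := by simpa [Finset.mem_Icc] using hx
  rcases Finset.mem_insert.1 hj with rfl | hjc
  · rw [Equiv.swap_self]
    simp only [Equiv.refl_apply]
    exact Finset.mem_erase.2 ⟨by omega, Finset.mem_insert_of_mem hx⟩
  · have hjn : 1 ≤ j ∧ j ≤ n := by simpa [Finset.mem_Icc] using hjc
    by_cases hxj : x = j
    · subst hxj
      rw [Equiv.swap_apply_left]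
      exact Finset.mem_erase.2 ⟨by omega, Finset.mem_insert_self _ _⟩
    · rw [Equiv.swap_apply_of_ne_of_ne hxj (by omega)]
      exact Finset.mem_erase.2 ⟨hxj, Finset.mem_insert_of_mem hx⟩

lemma swap_pool_image (n m i j : ℕ) (hi : i ∈ Finset.Icc 1 m) (hj : j ∈ poolJ n i) :
    ∀ y ∈ (poolJ n i).erase j, Equiv.swap j (n + i) y ∈ Finset.Icc 1 n := by
  simp only [Finset.mem_Icc] at hi
  intro y hy
  obtain ⟨hyj, hyJ⟩ := Finset.mem_erase.1 hy
  rcases Finset.mem_insert.1 hj with rfl | hjc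
  · rw [Equiv.swap_self]
    simp only [Equiv.refl_apply]
    rcases Finset.mem_insert.1 hyJ with rfl | h
    · omega
    · exact h
  · have hjn : 1 ≤ j ∧ j ≤ n := by simpa [Finset.mem_Icc] using hjc
    rcases Finset.mem_insert.1 hyJ with rfl | h
    · rw [Equiv.swap_apply_right]; simp [Finset.mem_Icc]; omega
    · have hyn : 1 ≤ y ∧ y ≤ n := by simpa [Finset.mem_Icc] using h
      rw [Equiv.swap_apply_of_ne_of_ne hyj (by omega)]
      exact h

/-- Count of calibration scores (after swapping) above a threshold equals count of
pool scores minus `j` above that threshold. -/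
lemma cardW (n m i j : ℕ) (s : ℕ → ℝ) (hi : i ∈ Finset.Icc 1 m) (hj : j ∈ poolJ n i)
    (v : ℝ) :
    ((Finset.Icc 1 n).filter (fun x => v ≤ s (Equiv.swap j (n + i) x))).card =
      (((poolJ n i).erase j).filter (fun y => v ≤ s y)).card := by
  apply Finset.card_bij' (fun x _ => Equiv.swap j (n + i) x) (fun y _ => Equiv.swap j (n + i) y)
  · intro a ha
    simp only [Finset.mem_filter] at ha ⊢
    exact ⟨swap_calib_image n m i j hi hj a ha.1, ha.2⟩
  · intro a ha
    simp only [Finset.mem_filter] at ha ⊢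
    refine ⟨swap_pool_image n m i j hi hj a ha.1, ?_⟩
    rw [Equiv.swap_apply_self]
    exact ha.2
  · intro a _; exact Equiv.swap_apply_self _ _ _
  · intro a _; exact Equiv.swap_apply_self _ _ _

lemma rnk_pos (n i : ℕ) (s : ℕ → ℝ) (j : ℕ) (hj : j ∈ poolJ n i) : 1 ≤ rnk n i s j :=
  Finset.card_pos.2 ⟨j, Finset.mem_filter.2 ⟨hj, le_refl _⟩⟩

/-- Strict antitonicity of the rank. -/
lemma rnk_anti (n i : ℕ) (s : ℕ → ℝ) (j j' : ℕ) (hj : j ∈ poolJ n i) (hj' : j' ∈ poolJ n i)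
    (hlt : s j' < s j) : rnk n i s j < rnk n i s j' := by
  have hsub : (poolJ n i).filter (fun x => s j ≤ s x) ⊆
      ((poolJ n i).filter (fun x => s j' ≤ s x)).erase j' := by
    intro x hx
    obtain ⟨hx1, hx2⟩ := Finset.mem_filter.1 hx
    refine Finset.mem_erase.2 ⟨?_, Finset.mem_filter.2 ⟨hx1, le_trans hlt.le hx2⟩⟩
    rintro rfl
    exact absurd hx2 (not_le.2 hlt)
  have h1 : rnk n i s j ≤ ((poolJ n i).filter (fun x => s j' ≤ s x)).card - 1 := by
    have := Finset.card_le_card hsub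
    have hmem : j' ∈ (poolJ n i).filter (fun x => s j' ≤ s x) :=
      Finset.mem_filter.2 ⟨hj', le_refl _⟩
    rwa [Finset.card_erase_of_mem hmem] at this
  have h2 : 1 ≤ rnk n i s j' := rnk_pos n i s j' hj'
  unfold rnk at *
  omega

/-- If `s j' < s (n+b)` then there are strictly more pool values above `s j'`
than above `s (n+b)`. -/
lemma Qc_lt_rnk (n i : ℕ) (s : ℕ → ℝ) (j' b : ℕ) (hj' : j' ∈ poolJ n i)
    (hlt : s j' < s (n + b)) : Qc n i s b + 1 ≤ rnk n i s j' := by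
  have hsub : insert j' ((poolJ n i).filter (fun y => s (n + b) ≤ s y)) ⊆
      (poolJ n i).filter (fun x => s j' ≤ s x) := by
    intro x hx
    rcases Finset.mem_insert.1 hx with rfl | hx
    · exact Finset.mem_filter.2 ⟨hj', le_refl _⟩
    · obtain ⟨hx1, hx2⟩ := Finset.mem_filter.1 hx
      exact Finset.mem_filter.2 ⟨hx1, le_trans hlt.le hx2⟩
  have hnotmem : j' ∉ (poolJ n i).filter (fun y => s (n + b) ≤ s y) := by
    simp only [Finset.mem_filter, not_and]
    exact fun _ => not_le.2 hlt
  have := Finset.card_le_card hsub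
  rwa [Finset.card_insert_of_notMem hnotmem] at this

/-- Monotonicity of `Kv`. -/
lemma Kv_mono (n m i : ℕ) (s : ℕ → ℝ) (j j' : ℕ) (hle : s j' ≤ s j) :
    Kv n m i s j ≤ Kv n m i s j' := by
  unfold Kv
  have hsub : ((Finset.Icc 1 m).erase i).filter (fun b => s j ≤ s (n + b)) ⊆
      ((Finset.Icc 1 m).erase i).filter (fun b => s j' ≤ s (n + b)) := by
    intro x hx
    obtain ⟨hx1, hx2⟩ := Finset.mem_filter.1 hx
    exact Finset.mem_filter.2 ⟨hx1, le_trans hle hx2⟩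
  have := Finset.card_le_card hsub
  omega

/-- `oRk b < Kv j` iff the test score of `b` lies above `s j`. -/
lemma oRk_lt_Kv_iff (n m i : ℕ) (s : ℕ → ℝ) (j b : ℕ)
    (hb : b ∈ (Finset.Icc 1 m).erase i) (hne : s (n + b) ≠ s j) :
    (oRk n m i s b < Kv n m i s j ↔ s j < s (n + b)) := by
  constructor
  · intro h
    by_contra hc
    push_neg at hc
    have hlt : s (n + b) < s j := lt_of_le_of_ne hc hne
    -- then oRk b ≥ Kv j
    have hsub : insert b (((Finset.Icc 1 m).erase i).filter (fun b' => s j ≤ s (n + b'))) ⊆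
        ((Finset.Icc 1 m).erase i).filter (fun b' => s (n + b) ≤ s (n + b')) := by
      intro x hx
      rcases Finset.mem_insert.1 hx with rfl | hx
      · exact Finset.mem_filter.2 ⟨hb, le_refl _⟩
      · obtain ⟨hx1, hx2⟩ := Finset.mem_filter.1 hx
        exact Finset.mem_filter.2 ⟨hx1, le_trans hlt.le hx2⟩
    have hnotmem : b ∉ ((Finset.Icc 1 m).erase i).filter (fun b' => s j ≤ s (n + b')) := by
      simp only [Finset.mem_filter, not_and]
      exact fun _ => not_le.2 hlt
    have hcard := Finset.card_le_card hsub
    rw [Finset.card_insert_of_notMem hnotmem] at hcard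
    unfold oRk Kv at h
    omega
  · intro h
    have hsub : ((Finset.Icc 1 m).erase i).filter (fun b' => s (n + b) ≤ s (n + b')) ⊆
        ((Finset.Icc 1 m).erase i).filter (fun b' => s j ≤ s (n + b')) := by
      intro x hx
      obtain ⟨hx1, hx2⟩ := Finset.mem_filter.1 hx
      exact Finset.mem_filter.2 ⟨hx1, le_trans h.le hx2⟩
    have := Finset.card_le_card hsub
    unfold oRk Kv
    omega
/-! ### Translating the gap condition into rank inequalities -/

lemma gap_arith {N mR a x y kh kp : ℝ} (hN : 0 < N) (hmR : 0 < mR)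
    (h : x / N - a * kh / mR + 1 / N ≤ y / N - a * kp / mR) :
    x + 1 ≤ y + (N * a / mR) * kh - (N * a / mR) * kp := by
  have key : x + 1 - y =
      N * ((x / N - a * kh / mR + 1 / N) - (y / N - a * kp / mR))
        + (N * a / mR) * kh - (N * a / mR) * kp := by
    field_simp
    ring
  have h3 : N * ((x / N - a * kh / mR + 1 / N) - (y / N - a * kp / mR)) ≤ N * 0 :=
    mul_le_mul_of_nonneg_left (sub_nonpos.2 h) hN.le
  rw [mul_zero] at h3
  linarith

/-- The numerator count of the conformal p-value of `i` after swapping `j ↔ n+i`. -/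
lemma pval_swap_i_count (n m i j : ℕ) (s : ℕ → ℝ) (hi : i ∈ Finset.Icc 1 m)
    (hj : j ∈ poolJ n i) :
    ((Finset.Icc 1 n).filter (fun x => s j ≤ s (Equiv.swap j (n + i) x))).card + 1 =
      rnk n i s j := by
  rw [cardW n m i j s hi hj (s j)]
  have hmem : j ∈ (poolJ n i).filter (fun x => s j ≤ s x) :=
    Finset.mem_filter.2 ⟨hj, le_refl _⟩
  rw [Finset.filter_erase, Finset.card_erase_of_mem hmem]
  have : 1 ≤ rnk n i s j := rnk_pos n i s j hj
  unfold rnk at *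
  omega

/-- The numerator count of the conformal p-value of `b ≠ i` after swapping. -/
lemma pval_swap_other_count (n m i j b : ℕ) (s : ℕ → ℝ) (hi : i ∈ Finset.Icc 1 m)
    (hj : j ∈ poolJ n i) (hb : b ∈ (Finset.Icc 1 m).erase i) :
    ((Finset.Icc 1 n).filter (fun x => s (n + b) ≤ s (Equiv.swap j (n + i) x))).card
        + (if s (n + b) ≤ s j then 1 else 0) = Qc n i s b := by
  rw [cardW n m i j s hi hj (s (n + b)), Finset.filter_erase]
  by_cases hc : s (n + b) ≤ s j
  · have hmem : j ∈ (poolJ n i).filter (fun y => s (n + b) ≤ s y) :=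
      Finset.mem_filter.2 ⟨hj, hc⟩
    rw [if_pos hc, Finset.card_erase_of_mem hmem]
    have : 1 ≤ Qc n i s b := Finset.card_pos.2 ⟨j, hmem⟩
    unfold Qc at *
    omega
  · have hnotmem : j ∉ (poolJ n i).filter (fun y => s (n + b) ≤ s y) := by
      simp only [Finset.mem_filter, not_and]
      exact fun _ => hc
    rw [if_neg hc, Finset.erase_eq_of_notMem hnotmem]
    rfl

/-- Main extraction: from membership in `EvtI`, rank inequalities. -/
lemma extract (n m : ℕ) (hm : 1 ≤ m) (α : ℝ) (hmR : 0 < (m : ℝ))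
    (s : ℕ → ℝ) (hs : Set.InjOn s (Finset.Icc 1 (n + m)))
    (i : ℕ) (hi : i ∈ Finset.Icc 1 m) (j : ℕ) (hj : j ∈ poolJ n i)
    (hgood : (fun x => s (Equiv.swap j (n + i) x)) ∈ EvtI n m α i) :
    Kv n m i s j ≤ m ∧
    ((rnk n i s j : ℝ) + 1 ≤ (((n : ℝ) + 1) * α / m) * (Kv n m i s j : ℝ)) ∧
    (∀ k', 1 ≤ k' → k' ≤ m → k' ≠ Kv n m i s j →
      ∃ b ∈ (Finset.Icc 1 m).erase i,
        (oRk n m i s b = if Kv n m i s j < k' then k' - 1 else k') ∧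
        (k' < Kv n m i s j →
          (rnk n i s j : ℝ) ≤ (Qc n i s b : ℝ)
            + (((n : ℝ) + 1) * α / m) * ((Kv n m i s j : ℝ) - (k' : ℝ))) ∧
        (Kv n m i s j < k' →
          (rnk n i s j : ℝ) + 1 + (((n : ℝ) + 1) * α / m) * ((k' : ℝ) - (Kv n m i s j : ℝ))
            ≤ (Qc n i s b : ℝ))) := by
  classical
  obtain ⟨σ', hST, h1, hσi⟩ := hgood
  set w : ℕ → ℝ := fun x => s (Equiv.swap j (n + i) x) with hw
  obtain ⟨hSLGeq, hk1, hgap⟩ := khatSLG_pos_iff n m α w σ' h1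
  set kh := khatSL n m α w σ' with hkh
  have hkm : kh ≤ m := maxArgmin_le m _
  have hσk : σ' kh = i := by rw [← hSLGeq]; exact hσi
  obtain ⟨hσ0, hbij, hord⟩ := hST
  have hi12 : 1 ≤ i ∧ i ≤ m := by simpa [Finset.mem_Icc] using hi
  have hN : (0 : ℝ) < (n : ℝ) + 1 := by positivity
  -- basic facts about sigma'
  have hmaps : ∀ k ∈ Finset.Icc 1 m, σ' k ∈ Finset.Icc 1 m := by
    intro k hk
    have := hbij.1 (by rwa [Finset.mem_coe] : (k : ℕ) ∈ (↑(Finset.Icc 1 m) : Set ℕ))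
    rwa [Finset.mem_coe] at this
  have hinj : ∀ k ∈ Finset.Icc 1 m, ∀ k' ∈ Finset.Icc 1 m, σ' k = σ' k' → k = k' := by
    intro k hk k' hk' heq
    exact hbij.2.1 (by rwa [Finset.mem_coe]) (by rwa [Finset.mem_coe]) heq
  have hsurj : ∀ b ∈ Finset.Icc 1 m, ∃ k ∈ Finset.Icc 1 m, σ' k = b := by
    intro b hb
    obtain ⟨k, hk, hkb⟩ := hbij.2.2 (by rwa [Finset.mem_coe] : (b:ℕ) ∈ (↑(Finset.Icc 1 m) : Set ℕ))
    exact ⟨k, by rwa [Finset.mem_coe] at hk, hkb⟩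
  have hkhmem : kh ∈ Finset.Icc 1 m := by simp only [Finset.mem_Icc]; omega
  -- values
  have hwi : w (n + i) = s j := by
    simp only [hw]
    rw [Equiv.swap_apply_right]
  have hwv : ∀ k ∈ Finset.Icc 1 m, σ' k ≠ i → w (n + σ' k) = s (n + σ' k) := by
    intro k hk hne
    have hσm := hmaps k hk
    have hbmem : σ' k ∈ (Finset.Icc 1 m).erase i := Finset.mem_erase.2 ⟨hne, hσm⟩
    simp only [hw]
    rw [Equiv.swap_apply_of_ne_of_ne (testIdx_ne_pool n m i j (σ' k) hj hbmem)
      (by have : σ' k ≠ i := hne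
          simp only [Finset.mem_Icc] at hσm
          omega)]
  have hordIff : ∀ k ∈ Finset.Icc 1 m, ∀ k' ∈ Finset.Icc 1 m,
      (k < k' ↔ w (n + σ' k') < w (n + σ' k)) := by
    intro k hk k' hk'
    constructor
    · exact fun h => hord k hk k' hk' h
    · intro h
      rcases lt_trichotomy k k' with h' | h' | h'
      · exact h'
      · subst h'; exact absurd h (lt_irrefl _)
      · exact absurd (hord k' hk' k hk h') (not_lt.2 h.le)
  have sj_ne : ∀ b ∈ (Finset.Icc 1 m).erase i, s (n + b) ≠ s j := by
    intro b hb heq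
    have h1' : (n + b : ℕ) ∈ (↑(Finset.Icc 1 (n + m)) : Set ℕ) := by
      rw [Finset.mem_coe]
      exact testIdx_mem n m b (Finset.mem_of_mem_erase hb)
    have h2' : (j : ℕ) ∈ (↑(Finset.Icc 1 (n + m)) : Set ℕ) := by
      rw [Finset.mem_coe]
      exact poolJ_subset n m i hi hj
    exact testIdx_ne_pool n m i j b hj hb (hs h1' h2' heq)
  -- Kv j = kh
  have hKeq : Kv n m i s j = kh := by
    have hcard : (Finset.Icc 1 (kh - 1)).card =
        (((Finset.Icc 1 m).erase i).filter (fun b => s j ≤ s (n + b))).card := by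
      apply Finset.card_bij (fun k' _ => σ' k')
      · intro a ha
        simp only [Finset.mem_Icc] at ha
        have haI : a ∈ Finset.Icc 1 m := by simp only [Finset.mem_Icc]; omega
        have hane : σ' a ≠ i := by
          intro heq
          have : a = kh := hinj a haI kh hkhmem (by rw [heq, hσk])
          omega
        refine Finset.mem_filter.2 ⟨Finset.mem_erase.2 ⟨hane, hmaps a haI⟩, ?_⟩
        have hlt := hord a haI kh hkhmem (by omega)
        rw [hσk, hwi, hwv a haI hane] at hlt
        exact hlt.le
      · intro a₁ ha₁ a₂ ha₂ heq
        simp only [Finset.mem_Icc] at ha₁ ha₂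
        exact hinj a₁ (by simp only [Finset.mem_Icc]; omega) a₂
          (by simp only [Finset.mem_Icc]; omega) heq
      · intro b hbmem
        obtain ⟨hb1, hb2⟩ := Finset.mem_filter.1 hbmem
        obtain ⟨k'', hk''I, hk''b⟩ := hsurj b (Finset.mem_of_mem_erase hb1)
        have hk''ne : k'' ≠ kh := by
          intro heq
          rw [heq, hσk] at hk''b
          exact Finset.ne_of_mem_erase hb1 hk''b.symm
        have hlt : w (n + σ' kh) < w (n + σ' k'') := by
          rw [hσk, hwi, hwv k'' hk''I (by rw [hk''b]; exact Finset.ne_of_mem_erase hb1), hk''b]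
          exact lt_of_le_of_ne hb2 (Ne.symm (sj_ne b hb1))
        have hk''lt : k'' < kh := (hordIff k'' hk''I kh hkhmem).2 hlt
        simp only [Finset.mem_Icc] at hk''I
        exact ⟨k'', by simp only [Finset.mem_Icc]; omega, hk''b⟩
    rw [Nat.card_Icc] at hcard
    unfold Kv
    omega
  -- the p-value of i
  have hpvi : pval n w i = (rnk n i s j : ℝ) / ((n : ℝ) + 1) := by
    unfold pval
    have hcnt := pval_swap_i_count n m i j s hi hj
    have : ((Finset.Icc 1 n).filter (fun x => w (n + i) ≤ w x)) =
        ((Finset.Icc 1 n).filter (fun x => s j ≤ s (Equiv.swap j (n + i) x))) := by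
      apply Finset.filter_congr
      intro x _
      rw [hwi]
    rw [this]
    have h9 : (1 : ℝ) + (((Finset.Icc 1 n).filter
        (fun x => s j ≤ s (Equiv.swap j (n + i) x))).card : ℝ) = (rnk n i s j : ℝ) := by
      rw [← hcnt]
      push_cast
      ring
    rw [h9]
  -- pOrd at kh
  have hpOrdkh : pOrd n w σ' kh = (rnk n i s j : ℝ) / ((n : ℝ) + 1) := by
    unfold pOrd
    rw [if_neg (by omega), hσk, hpvi]
  refine ⟨hKeq ▸ hkm, ?_, ?_⟩
  · -- (F2): gap vs k' = 0
    have h0 := hgap 0 (Nat.zero_le m) (by omega)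
    rw [hpOrdkh] at h0
    have h0' : pOrd n w σ' 0 = 0 := by unfold pOrd; rw [if_pos rfl]
    rw [h0'] at h0
    have harith := gap_arith (a := α) (x := (rnk n i s j : ℝ)) (y := 0)
      (kh := (kh : ℝ)) (kp := (0 : ℝ)) hN hmR (by simpa using h0)
    rw [hKeq]
    push_cast
    push_cast at harith
    linarith
  · -- gap vs k' ∈ [1, m]
    intro k' hk'1 hk'm hk'ne
    rw [hKeq] at hk'ne
    have hk'I : k' ∈ Finset.Icc 1 m := by simp only [Finset.mem_Icc]; omega
    set b := σ' k' with hbdef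
    have hbne : b ≠ i := by
      intro heq
      exact hk'ne (hinj k' hk'I kh hkhmem ((hbdef ▸ heq).trans hσk.symm))
    have hbmem : b ∈ (Finset.Icc 1 m).erase i := Finset.mem_erase.2 ⟨hbne, hmaps k' hk'I⟩
    -- oRk computation
    have hoR : oRk n m i s b = if kh < k' then k' - 1 else k' := by
      have hcard : ((Finset.Icc 1 k').erase kh).card =
          (((Finset.Icc 1 m).erase i).filter (fun b' => s (n + b) ≤ s (n + b'))).card := by
        apply Finset.card_bij (fun a _ => σ' a)
        · intro a ha
          obtain ⟨hane, haI'⟩ := Finset.mem_erase.1 ha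
          simp only [Finset.mem_Icc] at haI'
          have haI : a ∈ Finset.Icc 1 m := by simp only [Finset.mem_Icc]; omega
          have hσane : σ' a ≠ i := fun heq => hane (hinj a haI kh hkhmem (heq.trans hσk.symm))
          refine Finset.mem_filter.2 ⟨Finset.mem_erase.2 ⟨hσane, hmaps a haI⟩, ?_⟩
          rcases eq_or_lt_of_le (haI'.2 : a ≤ k') with rfl | hlt
          · rw [← hbdef]
          · have hwlt := hord a haI k' hk'I hlt
            rw [hwv k' hk'I (hbdef ▸ hbne), hwv a haI hσane, ← hbdef] at hwlt
            exact hwlt.le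
        · intro a₁ ha₁ a₂ ha₂ heq
          obtain ⟨-, h₁⟩ := Finset.mem_erase.1 ha₁
          obtain ⟨-, h₂⟩ := Finset.mem_erase.1 ha₂
          simp only [Finset.mem_Icc] at h₁ h₂
          exact hinj a₁ (by simp only [Finset.mem_Icc]; omega) a₂
            (by simp only [Finset.mem_Icc]; omega) heq
        · intro b' hb'
          obtain ⟨hb'1, hb'2⟩ := Finset.mem_filter.1 hb'
          obtain ⟨k'', hk''I, hk''b⟩ := hsurj b' (Finset.mem_of_mem_erase hb'1)
          have hσk''ne : σ' k'' ≠ i := by rw [hk''b]; exact Finset.ne_of_mem_erase hb'1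
          have hk''ne : k'' ≠ kh := fun heq =>
            Finset.ne_of_mem_erase hb'1 (by rw [← hk''b, heq, hσk])
          have hk''le : k'' ≤ k' := by
            by_cases hbb : b' = b
            · have : k'' = k' := hinj k'' hk''I k' hk'I (by rw [hk''b, hbb, hbdef])
              omega
            · have hne2 : s (n + b) ≠ s (n + b') := by
                intro heq
                have e1 : (n + b : ℕ) ∈ (↑(Finset.Icc 1 (n + m)) : Set ℕ) := by
                  rw [Finset.mem_coe]
                  exact testIdx_mem n m b (Finset.mem_of_mem_erase hbmem)
                have e2 : (n + b' : ℕ) ∈ (↑(Finset.Icc 1 (n + m)) : Set ℕ) := by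
                  rw [Finset.mem_coe]
                  exact testIdx_mem n m b' (Finset.mem_of_mem_erase hb'1)
                have := hs e1 e2 heq
                exact hbb (by omega)
              have hwlt : w (n + σ' k') < w (n + σ' k'') := by
                rw [← hbdef, hwv k' hk'I hbne, hwv k'' hk''I hσk''ne, hk''b]
                exact lt_of_le_of_ne hb'2 hne2
              exact ((hordIff k'' hk''I k' hk'I).2 hwlt).le
          simp only [Finset.mem_Icc] at hk''I
          exact ⟨k'', Finset.mem_erase.2 ⟨hk''ne, by simp only [Finset.mem_Icc]; omega⟩, hk''b⟩
      by_cases hkk : kh < k'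
      · have hmem : kh ∈ Finset.Icc 1 k' := by simp only [Finset.mem_Icc]; omega
        rw [Finset.card_erase_of_mem hmem, Nat.card_Icc] at hcard
        rw [if_pos hkk]
        unfold oRk
        omega
      · have hnotmem : kh ∉ Finset.Icc 1 k' := by simp only [Finset.mem_Icc]; omega
        rw [Finset.erase_eq_of_notMem hnotmem, Nat.card_Icc] at hcard
        rw [if_neg hkk]
        unfold oRk
        omega
    -- the gap inequality at k'
    have hgk := hgap k' hk'm (by omega)
    rw [hpOrdkh] at hgk
    have hpOrdk' : pOrd n w σ' k' = pval n w b := by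
      unfold pOrd
      rw [if_neg (by omega), ← hbdef]
    rw [hpOrdk'] at hgk
    have hcnt := pval_swap_other_count n m i j b s hi hj hbmem
    have hwb : w (n + b) = s (n + b) := by
      rw [hbdef]
      exact hwv k' hk'I (hbdef ▸ hbne)
    have hfil : ((Finset.Icc 1 n).filter (fun x => w (n + b) ≤ w x)) =
        ((Finset.Icc 1 n).filter (fun x => s (n + b) ≤ s (Equiv.swap j (n + i) x))) := by
      apply Finset.filter_congr
      intro x _
      rw [hwb]
    have hpvb : pval n w b = (1 + (((Finset.Icc 1 n).filter
        (fun x => s (n + b) ≤ s (Equiv.swap j (n + i) x))).card : ℝ)) / ((n : ℝ) + 1) := by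
      unfold pval
      rw [hfil]
    refine ⟨b, hbmem, by rw [hKeq]; exact hoR, ?_, ?_⟩
    · -- k' < Kv : here χ = 0
      intro hlt
      rw [hKeq] at hlt ⊢
      have hχ : ¬ (s (n + b) ≤ s j) := by
        have hwlt := hord k' hk'I kh hkhmem hlt
        rw [hσk, ← hbdef, hwi, hwb] at hwlt
        exact not_le.2 hwlt
      rw [if_neg hχ] at hcnt
      have hyval : (1 : ℝ) + (((Finset.Icc 1 n).filter
          (fun x => s (n + b) ≤ s (Equiv.swap j (n + i) x))).card : ℝ)
            = 1 + (Qc n i s b : ℝ) := by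
        have : ((Finset.Icc 1 n).filter
            (fun x => s (n + b) ≤ s (Equiv.swap j (n + i) x))).card = Qc n i s b := by omega
        rw [this]
      rw [hpvb, hyval] at hgk
      have harith := gap_arith (N := (n : ℝ) + 1) (mR := (m : ℝ)) (a := α)
        (x := (rnk n i s j : ℝ)) (y := 1 + (Qc n i s b : ℝ))
        (kh := (kh : ℝ)) (kp := (k' : ℝ)) hN hmR hgk
      have hring : (((n : ℝ) + 1) * α / m) * ((kh : ℝ) - (k' : ℝ))
          = (((n : ℝ) + 1) * α / m) * (kh : ℝ) - (((n : ℝ) + 1) * α / m) * (k' : ℝ) := by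
        ring
      linarith
    · -- Kv < k' : here χ = 1
      intro hlt
      rw [hKeq] at hlt ⊢
      have hχ : s (n + b) ≤ s j := by
        have hwlt := hord kh hkhmem k' hk'I hlt
        rw [hσk, ← hbdef, hwi, hwb] at hwlt
        exact hwlt.le
      rw [if_pos hχ] at hcnt
      have hyval : (1 : ℝ) + (((Finset.Icc 1 n).filter
          (fun x => s (n + b) ≤ s (Equiv.swap j (n + i) x))).card : ℝ)
            = (Qc n i s b : ℝ) := by
        have h9 : ((Finset.Icc 1 n).filter
            (fun x => s (n + b) ≤ s (Equiv.swap j (n + i) x))).card + 1 = Qc n i s b := by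
          omega
        push_cast [← h9]
        ring
      rw [hpvb, hyval] at hgk
      have harith := gap_arith (N := (n : ℝ) + 1) (mR := (m : ℝ)) (a := α)
        (x := (rnk n i s j : ℝ)) (y := (Qc n i s b : ℝ))
        (kh := (kh : ℝ)) (kp := (k' : ℝ)) hN hmR hgk
      have hring : (((n : ℝ) + 1) * α / m) * ((k' : ℝ) - (kh : ℝ))
          = (((n : ℝ) + 1) * α / m) * (k' : ℝ) - (((n : ℝ) + 1) * α / m) * (kh : ℝ) := by
        ring
      linarith
/-! ### The counting bound -/

lemma snb_ne_sj (n m i j b : ℕ) (s : ℕ → ℝ) (hs : Set.InjOn s (Finset.Icc 1 (n + m)))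
    (hi : i ∈ Finset.Icc 1 m) (hj : j ∈ poolJ n i) (hb : b ∈ (Finset.Icc 1 m).erase i) :
    s (n + b) ≠ s j := by
  intro heq
  have h1 : (n + b : ℕ) ∈ (↑(Finset.Icc 1 (n + m)) : Set ℕ) := by
    rw [Finset.mem_coe]; exact testIdx_mem n m b (Finset.mem_of_mem_erase hb)
  have h2 : (j : ℕ) ∈ (↑(Finset.Icc 1 (n + m)) : Set ℕ) := by
    rw [Finset.mem_coe]; exact poolJ_subset n m i hi hj
  exact testIdx_ne_pool n m i j b hj hb (hs h1 h2 heq)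

lemma comb_bound (n m : ℕ) (hm : 1 ≤ m) (α : ℝ)
    (hmR : 0 < (m : ℝ)) (hA : 1 ≤ ((n : ℝ) + 1) * α / m)
    (s : ℕ → ℝ) (hs : Set.InjOn s (Finset.Icc 1 (n + m)))
    (i : ℕ) (hi : i ∈ Finset.Icc 1 m) :
    (((poolJ n i).filter
        (fun j => (fun x => s (Equiv.swap j (n + i) x)) ∈ EvtI n m α i)).card : ℝ)
      ≤ ((n : ℝ) + 1) * α / m := by
  classical
  set A := ((n : ℝ) + 1) * α / m with hAdef
  set G := (poolJ n i).filter
    (fun j => (fun x => s (Equiv.swap j (n + i) x)) ∈ EvtI n m α i) with hG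
  rcases G.eq_empty_or_nonempty with hGe | hGne
  · rw [hGe]; simpa using by linarith
  have hmemG : ∀ j ∈ G, j ∈ poolJ n i :=
    fun j hj => (Finset.mem_filter.1 hj).1
  have hfacts : ∀ j ∈ G,
      Kv n m i s j ≤ m ∧
      ((rnk n i s j : ℝ) + 1 ≤ A * (Kv n m i s j : ℝ)) ∧
      (∀ k', 1 ≤ k' → k' ≤ m → k' ≠ Kv n m i s j →
        ∃ b ∈ (Finset.Icc 1 m).erase i,
          (oRk n m i s b = if Kv n m i s j < k' then k' - 1 else k') ∧
          (k' < Kv n m i s j →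
            (rnk n i s j : ℝ) ≤ (Qc n i s b : ℝ) + A * ((Kv n m i s j : ℝ) - (k' : ℝ))) ∧
          (Kv n m i s j < k' →
            (rnk n i s j : ℝ) + 1 + A * ((k' : ℝ) - (Kv n m i s j : ℝ)) ≤ (Qc n i s b : ℝ))) :=
    fun j hj => extract n m hm α hmR s hs i hi j (hmemG j hj) (Finset.mem_filter.1 hj).2
  have hsinj : ∀ j ∈ G, ∀ j' ∈ G, s j = s j' → j = j' := by
    intro j hj j' hj' heq
    exact hs (by rw [Finset.mem_coe]; exact poolJ_subset n m i hi (hmemG j hj))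
      (by rw [Finset.mem_coe]; exact poolJ_subset n m i hi (hmemG j' hj')) heq
  have hKpos : ∀ j ∈ G, 1 ≤ Kv n m i s j := fun j _ => by unfold Kv; omega
  -- separation
  have hsep : ∀ j ∈ G, ∀ j' ∈ G, s j' < s j →
      (A * (Kv n m i s j' : ℝ) - (rnk n i s j' : ℝ)) + 1 ≤
        A * (Kv n m i s j : ℝ) - (rnk n i s j : ℝ) := by
    intro j hj j' hj' hlt
    obtain ⟨hKm, hF2, hFk⟩ := hfacts j hj
    obtain ⟨hKm', hF2', hFk'⟩ := hfacts j' hj'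
    have hKmono : Kv n m i s j ≤ Kv n m i s j' := Kv_mono n m i s j j' hlt.le
    rcases eq_or_lt_of_le hKmono with hKeq | hKlt
    · have hr := rnk_anti n i s j j' (hmemG j hj) (hmemG j' hj') hlt
      have hrR : (rnk n i s j : ℝ) + 1 ≤ (rnk n i s j' : ℝ) := by exact_mod_cast hr
      rw [hKeq]
      linarith
    · obtain ⟨b, hbmem, hboR, hbF3, hbF4⟩ := hFk (Kv n m i s j')
        (hKpos j' hj') hKm' (by omega)
      have h4 := hbF4 hKlt
      have hoRlt : oRk n m i s b < Kv n m i s j' := by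
        rw [hboR, if_pos hKlt]
        have := hKpos j' hj'
        omega
      have hsblt : s j' < s (n + b) :=
        (oRk_lt_Kv_iff n m i s j' b hbmem
          (snb_ne_sj n m i j' b s hs hi (hmemG j' hj') hbmem)).1 hoRlt
      have h1 := Qc_lt_rnk n i s j' b (hmemG j' hj') hsblt
      have h1R : (Qc n i s b : ℝ) + 1 ≤ (rnk n i s j' : ℝ) := by exact_mod_cast h1
      have hAexp : A * ((Kv n m i s j' : ℝ) - (Kv n m i s j : ℝ))
          = A * (Kv n m i s j' : ℝ) - A * (Kv n m i s j : ℝ) := by ring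
      linarith
  -- extremal elements
  obtain ⟨jhi, hjhiG, hjhi⟩ := Finset.exists_max_image G s hGne
  obtain ⟨jlo, hjloG, hjlo⟩ := Finset.exists_min_image G s hGne
  by_cases hsingle : jhi = jlo
  · -- all elements equal jlo
    have hGsub : G ⊆ {jlo} := by
      intro j hj
      rw [Finset.mem_singleton]
      apply hsinj j hj jlo hjloG
      have h1 := hjhi j hj
      have h2 := hjlo j hj
      rw [hsingle] at h1
      exact le_antisymm h1 h2
    have := Finset.card_le_card hGsub
    rw [Finset.card_singleton] at this
    calc (G.card : ℝ) ≤ 1 := by exact_mod_cast this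
    _ ≤ A := hA
  -- range bound
  have hslt : s jlo < s jhi := by
    rcases lt_or_eq_of_le (hjlo jhi hjhiG) with h | h
    · exact h
    · exact absurd (hsinj jhi hjhiG jlo hjloG h.symm) hsingle
  have hKmono2 : Kv n m i s jhi ≤ Kv n m i s jlo := Kv_mono n m i s jhi jlo hslt.le
  have hrange : A * (Kv n m i s jhi : ℝ) - (rnk n i s jhi : ℝ) ≤
      (A * (Kv n m i s jlo : ℝ) - (rnk n i s jlo : ℝ)) + (A - 1) := by
    obtain ⟨hKmhi, hF2hi, hFkhi⟩ := hfacts jhi hjhiG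
    obtain ⟨hKmlo, hF2lo, hFklo⟩ := hfacts jlo hjloG
    rcases eq_or_lt_of_le (hKpos jhi hjhiG) with hK1 | hK2
    · -- Kv jhi = 1
      have hr1 : (1 : ℝ) ≤ (rnk n i s jhi : ℝ) := by
        exact_mod_cast rnk_pos n i s jhi (hmemG jhi hjhiG)
      rw [← hK1]
      push_cast
      linarith
    · -- 2 ≤ Kv jhi
      set k' := Kv n m i s jhi - 1 with hk'def
      have hk'cast : (k' : ℝ) = (Kv n m i s jhi : ℝ) - 1 := by
        rw [hk'def]
        push_cast [Nat.cast_sub (by omega : 1 ≤ Kv n m i s jhi)]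
        ring
      obtain ⟨b, hbmem, hboR, hbF3, hbF4⟩ := hFklo k' (by omega) (by omega) (by omega)
      have h3 := hbF3 (by omega)
      have hoRlt : oRk n m i s b < Kv n m i s jhi := by
        rw [hboR, if_neg (by omega)]
        omega
      have hsblt : s jhi < s (n + b) :=
        (oRk_lt_Kv_iff n m i s jhi b hbmem
          (snb_ne_sj n m i jhi b s hs hi (hmemG jhi hjhiG) hbmem)).1 hoRlt
      have h1 := Qc_lt_rnk n i s jhi b (hmemG jhi hjhiG) hsblt
      have h1R : (Qc n i s b : ℝ) + 1 ≤ (rnk n i s jhi : ℝ) := by exact_mod_cast h1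
      have hAexp : A * ((Kv n m i s jlo : ℝ) - (k' : ℝ))
          = A * (Kv n m i s jlo : ℝ) - A * (k' : ℝ) := by ring
      rw [hk'cast] at h3
      nlinarith [h3, h1R]
  -- bounds for every element
  have hup : ∀ j ∈ G, A * (Kv n m i s j : ℝ) - (rnk n i s j : ℝ) ≤
      A * (Kv n m i s jhi : ℝ) - (rnk n i s jhi : ℝ) := by
    intro j hj
    by_cases h : j = jhi
    · rw [h]
    · have : s j < s jhi := by
        rcases lt_or_eq_of_le (hjhi j hj) with h' | h'
        · exact h'
        · exact absurd (hsinj j hj jhi hjhiG h') h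
      linarith [hsep jhi hjhiG j hj this]
  have hdown : ∀ j ∈ G, A * (Kv n m i s jlo : ℝ) - (rnk n i s jlo : ℝ) ≤
      A * (Kv n m i s j : ℝ) - (rnk n i s j : ℝ) := by
    intro j hj
    by_cases h : j = jlo
    · rw [h]
    · have : s jlo < s j := by
        rcases lt_or_eq_of_le (hjlo j hj) with h' | h'
        · exact h'
        · exact absurd (hsinj jlo hjloG j hj h') (fun hh => h hh.symm)
      linarith [hsep j hj jlo hjloG this]
  -- the floor injection
  set φ : ℕ → ℝ := fun j => A * (Kv n m i s j : ℝ) - (rnk n i s j : ℝ) with hφ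
  set fI : ℕ → ℤ := fun j => ⌊φ j - φ jlo⌋ with hfI
  have himg : ∀ j ∈ G, fI j ∈ Finset.Icc (0 : ℤ) ⌊A - 1⌋ := by
    intro j hj
    rw [Finset.mem_Icc]
    constructor
    · exact Int.floor_nonneg.2 (by have := hdown j hj; simp only [hφ]; linarith)
    · apply Int.floor_le_floor
      have h1 := hup j hj
      simp only [hφ]
      linarith
  have hinj2 : ∀ j ∈ G, ∀ j' ∈ G, fI j = fI j' → j = j' := by
    intro j hj j' hj' heq
    by_contra hne
    have hsneq : s j ≠ s j' := fun h => hne (hsinj j hj j' hj' h)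
    rcases lt_or_gt_of_ne hsneq with h | h
    · -- s j < s j' : φ j + 1 ≤ φ j'
      have := hsep j' hj' j hj h
      have hfl : fI j + 1 ≤ fI j' := by
        simp only [hfI]
        have : φ j - φ jlo + 1 ≤ φ j' - φ jlo := by simp only [hφ]; linarith
        calc ⌊φ j - φ jlo⌋ + 1 = ⌊φ j - φ jlo + 1⌋ := (Int.floor_add_one _).symm
        _ ≤ ⌊φ j' - φ jlo⌋ := Int.floor_le_floor this
      omega
    · have := hsep j hj j' hj' h
      have hfl : fI j' + 1 ≤ fI j := by
        simp only [hfI]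
        have : φ j' - φ jlo + 1 ≤ φ j - φ jlo := by simp only [hφ]; linarith
        calc ⌊φ j' - φ jlo⌋ + 1 = ⌊φ j' - φ jlo + 1⌋ := (Int.floor_add_one _).symm
        _ ≤ ⌊φ j - φ jlo⌋ := Int.floor_le_floor this
      omega
  -- count
  have hcard1 : G.card = (G.image fI).card :=
    (Finset.card_image_of_injOn hinj2).symm
  have hcard2 : (G.image fI).card ≤ (Finset.Icc (0 : ℤ) ⌊A - 1⌋).card := by
    apply Finset.card_le_card
    intro x hx
    obtain ⟨j, hj, rfl⟩ := Finset.mem_image.1 hx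
    exact himg j hj
  have hfloor_nonneg : (0 : ℤ) ≤ ⌊A - 1⌋ := Int.floor_nonneg.2 (by linarith)
  have hcard3 : (Finset.Icc (0 : ℤ) ⌊A - 1⌋).card = (⌊A - 1⌋ + 1).toNat := by
    rw [Int.card_Icc]
    ring_nf
  have h4 : G.card ≤ (⌊A - 1⌋ + 1).toNat := by
    rw [hcard1]
    exact hcard2.trans_eq hcard3
  have h5 : (G.card : ℤ) ≤ ⌊A - 1⌋ + 1 := by omega
  have h6 : ((⌊A - 1⌋ : ℤ) : ℝ) ≤ A - 1 := Int.floor_le _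
  have h7 : (G.card : ℝ) ≤ ((⌊A - 1⌋ + 1 : ℤ) : ℝ) := by exact_mod_cast h5
  push_cast at h7
  linarith
open scoped ENNReal

/-- Theorem A.2 of the paper: under Assumption (A1), if
`1/(n+1) ≤ α/m`, the SLG procedure at level `α ∈ (0,1)` satisfies
`bFDR(SLG) ≤ α·m₀/m`. -/
theorem SLG_bFDR_control
    {Ω : Type*} [MeasurableSpace Ω] (μ : Measure Ω) [IsProbabilityMeasure μ]
    (n m : ℕ) (hn : 1 ≤ n) (hm : 1 ≤ m)
    (α : ℝ) (hα : α ∈ Set.Ioo (0 : ℝ) 1)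
    (hcond : 1 / ((n : ℝ) + 1) ≤ α / m)
    (S : Ω → ℕ → ℝ) (hS : Measurable S)
    (H0 : Finset ℕ) (hH0 : H0 ⊆ Finset.Icc 1 m)
    (hexch : ExchangeableNulls μ n H0 S)
    (hdist : ∀ᵐ ω ∂μ, Set.InjOn (S ω) (Finset.Icc 1 (n + m)))
    (σ : Ω → ℕ → ℕ) (hσ : ∀ᵐ ω ∂μ, SortsTest n m (S ω) (σ ω)) :
    μ {ω | 1 ≤ khatSLG n m α (S ω) (σ ω) ∧ σ ω (khatSLG n m α (S ω) (σ ω)) ∈ H0}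
      ≤ ENNReal.ofReal (α * H0.card / m) := by
  classical
  obtain ⟨hα0, hα1⟩ := hα
  have hmR : (0 : ℝ) < m := by exact_mod_cast hm
  have hN : (0 : ℝ) < (n : ℝ) + 1 := by positivity
  have hA : 1 ≤ ((n : ℝ) + 1) * α / m := by
    rw [div_le_div_iff₀ hN hmR] at hcond
    rw [le_div_iff₀ hmR]
    nlinarith
  -- the bad (null) event
  set Bad : Set Ω :=
    {ω | ¬ (Set.InjOn (S ω) (Finset.Icc 1 (n + m)) ∧ SortsTest n m (S ω) (σ ω))} with hBad
  have hbad0 : μ Bad = 0 := by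
    have hae := hdist.and hσ
    rw [MeasureTheory.ae_iff] at hae
    exact hae
  -- inclusion of the main event
  have hsubset : {ω | 1 ≤ khatSLG n m α (S ω) (σ ω) ∧
      σ ω (khatSLG n m α (S ω) (σ ω)) ∈ H0} ⊆
      (⋃ i ∈ H0, S ⁻¹' (EvtI n m α i)) ∪ Bad := by
    intro ω hω
    by_cases hg : Set.InjOn (S ω) (Finset.Icc 1 (n + m)) ∧ SortsTest n m (S ω) (σ ω)
    · left
      apply Set.mem_iUnion₂.2
      exact ⟨σ ω (khatSLG n m α (S ω) (σ ω)), hω.2, ⟨σ ω, hg.2, hω.1, rfl⟩⟩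
    · right
      exact hg
  -- per-null-point bound
  have hper : ∀ i ∈ H0, μ (S ⁻¹' (EvtI n m α i)) ≤ ENNReal.ofReal (α / m) := by
    intro i hiH
    have hiI : i ∈ Finset.Icc 1 m := hH0 hiH
    have hEim : MeasurableSet (EvtI n m α i) := measurableSet_EvtI n m hm α i
    have hi1 : 1 ≤ i := by simp only [Finset.mem_Icc] at hiI; exact hiI.1
    -- swap maps
    have hTmeas : ∀ j : ℕ, Measurable (fun ω => fun x => S ω (Equiv.swap j (n + i) x)) :=
      fun j => measurable_pi_lambda _ (fun x => (measurable_pi_apply _).comp hS)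
    have hmapeq : ∀ j ∈ poolJ n i,
        μ ((fun ω => fun x => S ω (Equiv.swap j (n + i) x)) ⁻¹' (EvtI n m α i))
          = μ (S ⁻¹' (EvtI n m α i)) := by
      intro j hj
      have hfix : ∀ x ∉ NullIdx n H0, Equiv.swap j (n + i) x = x := by
        intro x hx
        have hjN : j ∈ NullIdx n H0 := by
          rcases Finset.mem_insert.1 hj with rfl | hjc
          · exact Finset.mem_union_right _ (Finset.mem_image.2 ⟨i, hiH, rfl⟩)
          · exact Finset.mem_union_left _ hjc
        have hniN : n + i ∈ NullIdx n H0 :=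
          Finset.mem_union_right _ (Finset.mem_image.2 ⟨i, hiH, rfl⟩)
        exact Equiv.swap_apply_of_ne_of_ne
          (fun h => hx (h ▸ hjN)) (fun h => hx (h ▸ hniN))
      have hmap := hexch (Equiv.swap j (n + i)) hfix
      calc μ ((fun ω => fun x => S ω (Equiv.swap j (n + i) x)) ⁻¹' (EvtI n m α i))
          = (Measure.map (fun ω => fun x => S ω (Equiv.swap j (n + i) x)) μ)
              (EvtI n m α i) := (Measure.map_apply (hTmeas j) hEim).symm
        _ = (Measure.map S μ) (EvtI n m α i) := by rw [hmap]
        _ = μ (S ⁻¹' (EvtI n m α i)) := Measure.map_apply hS hEim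
    -- sum over pool
    have hsum1 : ∑ j ∈ poolJ n i,
        μ ((fun ω => fun x => S ω (Equiv.swap j (n + i) x)) ⁻¹' (EvtI n m α i))
        = ((n : ℝ≥0∞) + 1) * μ (S ⁻¹' (EvtI n m α i)) := by
      rw [Finset.sum_congr rfl hmapeq, Finset.sum_const, card_poolJ n i hi1, nsmul_eq_mul]
      push_cast
      ring
    have hsum2 : ∑ j ∈ poolJ n i,
        μ ((fun ω => fun x => S ω (Equiv.swap j (n + i) x)) ⁻¹' (EvtI n m α i))
        = ∫⁻ ω, (∑ j ∈ poolJ n i,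
            Set.indicator ((fun ω => fun x => S ω (Equiv.swap j (n + i) x)) ⁻¹'
              (EvtI n m α i)) (1 : Ω → ℝ≥0∞) ω) ∂μ := by
      rw [MeasureTheory.lintegral_finset_sum]
      · refine Finset.sum_congr rfl fun j _ => ?_
        rw [MeasureTheory.lintegral_indicator_one ((hTmeas j) hEim)]
      · exact fun j _ => measurable_const.indicator ((hTmeas j) hEim)
    have hptwise : ∀ᵐ ω ∂μ, (∑ j ∈ poolJ n i,
        Set.indicator ((fun ω => fun x => S ω (Equiv.swap j (n + i) x)) ⁻¹'
          (EvtI n m α i)) (1 : Ω → ℝ≥0∞) ω)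
        ≤ ENNReal.ofReal (((n : ℝ) + 1) * α / m) := by
      filter_upwards [hdist] with ω hω
      have hsum3 : (∑ j ∈ poolJ n i,
          Set.indicator ((fun ω => fun x => S ω (Equiv.swap j (n + i) x)) ⁻¹'
            (EvtI n m α i)) (1 : Ω → ℝ≥0∞) ω)
          = (((poolJ n i).filter
              (fun j => (fun x => S ω (Equiv.swap j (n + i) x)) ∈ EvtI n m α i)).card
                : ℝ≥0∞) := by
        rw [Finset.card_filter]
        push_cast
        refine Finset.sum_congr rfl fun j _ => ?_
        rw [Set.indicator_apply]
        simp only [Pi.one_apply]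
        by_cases hmem : (fun x => S ω (Equiv.swap j (n + i) x)) ∈ EvtI n m α i
        · rw [if_pos (by exact hmem), if_pos hmem]
        · rw [if_neg (by exact hmem), if_neg hmem]
      rw [hsum3]
      have hcomb := comb_bound n m hm α hmR hA (S ω) hω i hiI
      calc (((poolJ n i).filter
          (fun j => (fun x => S ω (Equiv.swap j (n + i) x)) ∈ EvtI n m α i)).card : ℝ≥0∞)
          = ENNReal.ofReal ((((poolJ n i).filter
              (fun j => (fun x => S ω (Equiv.swap j (n + i) x)) ∈ EvtI n m α i)).card : ℝ)) := by
            rw [ENNReal.ofReal_natCast]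
        _ ≤ ENNReal.ofReal (((n : ℝ) + 1) * α / m) := ENNReal.ofReal_le_ofReal hcomb
    -- combine
    have hfinal : ((n : ℝ≥0∞) + 1) * μ (S ⁻¹' (EvtI n m α i))
        ≤ ENNReal.ofReal (((n : ℝ) + 1) * α / m) := by
      rw [← hsum1, hsum2]
      calc _ ≤ ∫⁻ _, ENNReal.ofReal (((n : ℝ) + 1) * α / m) ∂μ :=
            MeasureTheory.lintegral_mono_ae hptwise
        _ = ENNReal.ofReal (((n : ℝ) + 1) * α / m) := by
            rw [MeasureTheory.lintegral_const, measure_univ, mul_one]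
    have hsplit : ENNReal.ofReal (((n : ℝ) + 1) * α / m)
        = ((n : ℝ≥0∞) + 1) * ENNReal.ofReal (α / m) := by
      rw [show ((n : ℝ) + 1) * α / m = ((n : ℝ) + 1) * (α / m) by ring,
        ENNReal.ofReal_mul (by positivity)]
      congr 1
      rw [show ((n : ℝ) + 1) = ((n + 1 : ℕ) : ℝ) by push_cast; ring,
        ENNReal.ofReal_natCast]
      push_cast
      ring
    rw [hsplit] at hfinal
    have hne0 : ((n : ℝ≥0∞) + 1) ≠ 0 := by simp
    have hnetop : ((n : ℝ≥0∞) + 1) ≠ ⊤ := by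
      simp [ENNReal.add_eq_top]
    exact (ENNReal.mul_le_mul_iff_right hne0 hnetop).1 hfinal
  -- put everything together
  calc μ {ω | 1 ≤ khatSLG n m α (S ω) (σ ω) ∧
      σ ω (khatSLG n m α (S ω) (σ ω)) ∈ H0}
      ≤ μ ((⋃ i ∈ H0, S ⁻¹' (EvtI n m α i)) ∪ Bad) := measure_mono hsubset
    _ ≤ μ (⋃ i ∈ H0, S ⁻¹' (EvtI n m α i)) + μ Bad := measure_union_le _ _
    _ = μ (⋃ i ∈ H0, S ⁻¹' (EvtI n m α i)) := by rw [hbad0, add_zero]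
    _ ≤ ∑ i ∈ H0, μ (S ⁻¹' (EvtI n m α i)) := measure_biUnion_finset_le _ _
    _ ≤ ∑ _i ∈ H0, ENNReal.ofReal (α / m) := Finset.sum_le_sum hper
    _ = (H0.card : ℝ≥0∞) * ENNReal.ofReal (α / m) := by
        rw [Finset.sum_const, nsmul_eq_mul]
    _ = ENNReal.ofReal (α * H0.card / m) := by
        rw [show (H0.card : ℝ≥0∞) = ENNReal.ofReal ((H0.card : ℕ) : ℝ) by
          rw [ENNReal.ofReal_natCast],
          ← ENNReal.ofReal_mul (by positivity)]
        congr 1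
        ring
end
end

section
/- Assume α/m > 1/(n+1) and that the realized scores are pairwise distinct. Let p̃_k = p_{σ(k)} + k/(n+1) for k = 0,…,m (so p̃_0 = 0 and p̃_0 < p̃_1 < ⋯ < p̃_m), and let G : {0,…,m} → ℝ be the greatest convex minorant of the points {(k, p̃_k)}_{k=0}^m, i.e. G(k) = sup{g(k) : g convex on [0,m] with g(j) ≤ p̃_j for all j ∈ {0,…,m}}. Then the number of rejections of the SLC procedure satisfies k̂_SLC = max argmin_{k ∈ {0,…,m}} (p_{σ(k)} − k·(α/m − 1/(n+1))) = max argmin_{k ∈ {0,…,m}} (p̃_k − αk/m) = max({0} ∪ {k ∈ {1,…,m} : m·(G(k) − G(k−1)) ≤ α}). -/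
open MeasureTheory Finset

noncomputable section

attribute [local instance] Classical.propDecidable

namespace GCMaux

set_option linter.unusedSectionVars false

/-- affine functions are convex -/
lemma affine_convexOn (S : Set ℝ) (hS : Convex ℝ S) (a b c : ℝ) :
    ConvexOn ℝ S (fun x => a + b * (x - c)) := by
  refine ⟨hS, fun x _ y _ p q hp hq hpq => ?_⟩
  simp only [smul_eq_mul]
  have : p * (a + b * (x - c)) + q * (a + b * (y - c))
      = a + b * ((p * x + q * y) - c) + (p + q - 1) * (a - b * c) := by ring
  rw [this, hpq]; ring_nf
  exact le_refl _

variable (m : ℕ) (P G : ℕ → ℝ)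

def gset (k : ℕ) : Set ℝ :=
  {y : ℝ | ∃ g : ℝ → ℝ, ConvexOn ℝ (Set.Icc (0 : ℝ) m) g
      ∧ (∀ j ≤ m, g j ≤ P j) ∧ y = g k}

variable {m P G}
variable (hPpos : ∀ j ≤ m, 0 ≤ P j)
  (hG : ∀ k ≤ m, G k = sSup (gset m P k))

include hPpos

lemma gset_bdd {k : ℕ} (hk : k ≤ m) : BddAbove (gset m P k) := by
  refine ⟨P k, ?_⟩
  rintro y ⟨g, hg, hle, rfl⟩
  exact hle k hk

include hG

lemma le_G {k : ℕ} (hk : k ≤ m) {g : ℝ → ℝ}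
    (hg : ConvexOn ℝ (Set.Icc (0 : ℝ) m) g) (hle : ∀ j ≤ m, g j ≤ P j) :
    g k ≤ G k := by
  rw [hG k hk]
  exact le_csSup (gset_bdd hPpos hk) ⟨g, hg, hle, rfl⟩

lemma G_le {k : ℕ} (hk : k ≤ m) : G k ≤ P k := by
  rw [hG k hk]
  refine Real.sSup_le ?_ (hPpos k hk)
  rintro y ⟨g, hg, hle, rfl⟩
  exact hle k hk

lemma G_nonneg {k : ℕ} (hk : k ≤ m) : 0 ≤ G k := by
  have h0 : (fun _ : ℝ => (0:ℝ)) k ≤ G k :=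
    le_G hPpos hG hk (convexOn_const 0 (convex_Icc _ _)) (fun j hj => hPpos j hj)
  simpa using h0

lemma G_conv2 {k : ℕ} (hk : k + 2 ≤ m) : 2 * G (k + 1) ≤ G k + G (k + 2) := by
  have hk0 : k ≤ m := by omega
  have hk2 : k + 2 ≤ m := hk
  have hub : sSup (gset m P (k+1)) ≤ (G k + G (k + 2)) / 2 := by
    refine Real.sSup_le ?_ (by
      have := G_nonneg hPpos hG hk0
      have := G_nonneg hPpos hG hk2
      linarith)
    rintro y ⟨g, hg, hle, rfl⟩
    have hxmem : ((k : ℝ)) ∈ Set.Icc (0:ℝ) m := by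
      constructor <;> [positivity; exact_mod_cast hk0]
    have hymem : ((k : ℝ) + 2) ∈ Set.Icc (0:ℝ) m := by
      constructor
      · positivity
      · have : ((k:ℝ) + 2) = ((k + 2 : ℕ) : ℝ) := by push_cast; ring
        rw [this]; exact_mod_cast hk2
    have hcvx := hg.2 hxmem hymem (by norm_num : (0:ℝ) ≤ 1/2)
      (by norm_num : (0:ℝ) ≤ 1/2) (by norm_num)
    simp only [smul_eq_mul] at hcvx
    have harg : (1/2 : ℝ) * k + 1/2 * ((k:ℝ) + 2) = ((k + 1 : ℕ) : ℝ) := by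
      push_cast; ring
    rw [harg] at hcvx
    have h1 : g k ≤ G k := le_G hPpos hG hk0 hg hle
    have h2 : g ((k:ℝ) + 2) ≤ G (k + 2) := by
      have : ((k:ℝ) + 2) = ((k + 2 : ℕ) : ℝ) := by push_cast; ring
      rw [this]
      exact le_G hPpos hG hk2 hg hle
    linarith
  rw [hG (k+1) (by omega)]
  linarith

lemma slope_mono : ∀ i j : ℕ, i ≤ j → j + 1 ≤ m →
    G (i + 1) - G i ≤ G (j + 1) - G j := by
  intro i j hij hjm
  induction j, hij using Nat.le_induction with
  | base => exact le_refl _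
  | succ j hij ih =>
    have h1 := ih (by omega)
    have h2 := G_conv2 hPpos hG (k := j) (by omega)
    linarith

lemma chord_upper (c : ℝ) : ∀ i j : ℕ, i ≤ j → j ≤ m →
    (∀ t, i ≤ t → t + 1 ≤ j → G (t + 1) - G t ≤ c) →
    G j - G i ≤ c * ((j : ℝ) - i) := by
  intro i j hij hjm hsl
  induction j, hij using Nat.le_induction with
  | base => simp
  | succ j hij ih =>
    have h1 := ih (by omega) (fun t ht htj => hsl t ht (by omega))
    have h2 := hsl j hij (by omega)
    push_cast
    push_cast at h1
    nlinarith [h1, h2]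

lemma chord_lower (c : ℝ) : ∀ i j : ℕ, i ≤ j → j ≤ m →
    (∀ t, i ≤ t → t + 1 ≤ j → c ≤ G (t + 1) - G t) →
    c * ((j : ℝ) - i) ≤ G j - G i := by
  intro i j hij hjm hsl
  induction j, hij using Nat.le_induction with
  | base => simp
  | succ j hij ih =>
    have h1 := ih (by omega) (fun t ht htj => hsl t ht (by omega))
    have h2 := hsl j hij (by omega)
    push_cast
    push_cast at h1
    nlinarith [h1, h2]

lemma touch_m (hm : 1 ≤ m) : G m = P m := by
  refine le_antisymm (G_le hPpos hG (le_refl m)) ?_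
  -- construct a supporting line at m
  have hne : (Finset.range m).Nonempty := ⟨0, Finset.mem_range.mpr hm⟩
  set c : ℝ := (Finset.range m).sup' hne (fun j => (P m - P j) / ((m : ℝ) - j)) with hc
  set g : ℝ → ℝ := fun x => P m + c * (x - m) with hgdef
  have hgconv : ConvexOn ℝ (Set.Icc (0:ℝ) m) g := affine_convexOn _ (convex_Icc _ _) _ _ _
  have hgle : ∀ j ≤ m, g j ≤ P j := by
    intro j hj
    rcases eq_or_lt_of_le hj with rfl | hjlt
    · simp [hgdef]
    · have hcj : (P m - P j) / ((m : ℝ) - j) ≤ c := by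
        rw [hc]
        exact Finset.le_sup' (fun j => (P m - P j) / ((m : ℝ) - j))
          (Finset.mem_range.mpr hjlt)
      have hpos : (0:ℝ) < (m : ℝ) - j := by
        have : (j:ℝ) < m := by exact_mod_cast hjlt
        linarith
      rw [div_le_iff₀ hpos] at hcj
      simp only [hgdef]
      nlinarith [hcj]
  have := le_G hPpos hG (le_refl m) hgconv hgle
  simpa [hgdef] using this

lemma touch_kink {k : ℕ} (hk : k + 2 ≤ m)
    (hkink : G (k + 1) - G k < G (k + 2) - G (k + 1)) : G (k + 1) = P (k + 1) := by
  by_contra hne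
  have hlt : G (k + 1) < P (k + 1) :=
    lt_of_le_of_ne (G_le hPpos hG (by omega)) hne
  set A := G (k + 1) - G k with hA
  set B := G (k + 2) - G (k + 1) with hB
  set ε : ℝ := min (P (k + 1) - G (k + 1)) ((B - A) / 2) with hε
  have hεpos : 0 < ε := by
    apply lt_min <;> [linarith; linarith]
  have hε1 : ε ≤ P (k + 1) - G (k + 1) := min_le_left _ _
  have hε2 : ε ≤ (B - A) / 2 := min_le_right _ _
  set l₁ : ℝ → ℝ := fun x => (G (k + 1) + ε) + (A + ε) * (x - ((k : ℝ) + 1)) with hl₁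
  set l₂ : ℝ → ℝ := fun x => (G (k + 1) + ε) + (B - ε) * (x - ((k : ℝ) + 1)) with hl₂
  set g : ℝ → ℝ := fun x => max (l₁ x) (l₂ x) with hgdef
  have hslopes : A + ε ≤ B - ε := by linarith
  have hgconv : ConvexOn ℝ (Set.Icc (0:ℝ) m) g := by
    have h1 : ConvexOn ℝ (Set.Icc (0:ℝ) m) l₁ := affine_convexOn _ (convex_Icc _ _) _ _ _
    have h2 : ConvexOn ℝ (Set.Icc (0:ℝ) m) l₂ := affine_convexOn _ (convex_Icc _ _) _ _ _
    have := h1.sup h2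
    convert this using 1
    all_goals rfl
  have hgle : ∀ j ≤ m, g j ≤ P j := by
    intro j hj
    rcases lt_trichotomy j (k + 1) with hjk | hjk | hjk
    · -- j ≤ k
      have hjk' : j ≤ k := by omega
      have hdiff : ((j : ℝ) - ((k:ℝ) + 1)) ≤ -1 := by
        have : (j:ℝ) ≤ k := by exact_mod_cast hjk'
        linarith
      have hchord : G (k + 1) - G j ≤ A * (((k:ℝ) + 1) - j) := by
        have := chord_upper hPpos hG A j (k + 1) (by omega) (by omega)
          (fun t ht htj => by
            have hmono := slope_mono hPpos hG t k (by omega) (by omega)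
            simpa [hA] using hmono)
        have hcast : (((k + 1 : ℕ) : ℝ)) = (k : ℝ) + 1 := by push_cast; ring
        rw [hcast] at this
        linarith [this]
      have hl₁j : l₁ j ≤ P j := by
        have hGj : G j ≤ P j := G_le hPpos hG (by omega)
        simp only [hl₁]
        nlinarith [hεpos, hdiff, hchord, hGj]
      have hl₂j : l₂ j ≤ l₁ j := by
        simp only [hl₁, hl₂]
        nlinarith [hslopes, hdiff]
      simp only [hgdef]
      exact max_le hl₁j (le_trans hl₂j hl₁j)
    · -- j = k + 1
      subst hjk
      have : g ((k + 1 : ℕ) : ℝ) = G (k + 1) + ε := by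
        simp only [hgdef, hl₁, hl₂]
        push_cast
        ring_nf
        simp
      rw [this]
      linarith
    · -- j ≥ k + 2
      have hjk' : k + 2 ≤ j := by omega
      have hdiff : (1:ℝ) ≤ ((j : ℝ) - ((k:ℝ) + 1)) := by
        have : ((k:ℝ)) + 2 ≤ j := by exact_mod_cast hjk'
        linarith
      have hchord : B * ((j:ℝ) - ((k:ℝ) + 1)) ≤ G j - G (k + 1) := by
        have := chord_lower hPpos hG B (k + 1) j (by omega) hj
          (fun t ht htj => by
            have hmono := slope_mono hPpos hG (k + 1) t ht (by omega)
            simpa [hB] using hmono)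
        have hcast : (((k + 1 : ℕ) : ℝ)) = (k : ℝ) + 1 := by push_cast; ring
        rw [hcast] at this
        linarith [this]
      have hl₂j : l₂ j ≤ P j := by
        have hGj : G j ≤ P j := G_le hPpos hG hj
        simp only [hl₂]
        nlinarith [hεpos, hdiff, hchord, hGj]
      have hl₁j : l₁ j ≤ l₂ j := by
        simp only [hl₁, hl₂]
        nlinarith [hslopes, hdiff]
      simp only [hgdef]
      exact max_le (le_trans hl₁j hl₂j) hl₂j
  have hmem := le_G hPpos hG (show k + 1 ≤ m by omega) hgconv hgle
  have : g ((k + 1 : ℕ) : ℝ) = G (k + 1) + ε := by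
    simp only [hgdef, hl₁, hl₂]
    push_cast
    ring_nf
    simp
  rw [this] at hmem
  linarith

end GCMaux


/-- Proposition 4.4 of the paper: when `α/m > 1/(n+1)` and the
scores are pairwise distinct, the number of rejections of the SLC procedure is
the max-argmin of the supporting-line objective, equivalently the max-argmin of
`p̃_k − αk/m` for the shifted p-values `p̃_k = p_{σ(k)} + k/(n+1)`, and
equivalently the largest `k` (or `0`) whose left-hand slope of the greatest
convex minorant `G` of `{(k, p̃_k)}` satisfies `m(G(k) − G(k−1)) ≤ α`. -/
theorem SLC_grenander_representation
    (n m : ℕ) (hn : 1 ≤ n) (hm : 1 ≤ m)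
    (s : ℕ → ℝ) (hdist : Set.InjOn s (Finset.Icc 1 (n + m)))
    (σ : ℕ → ℕ) (hσ : SortsTest n m s σ)
    (α : ℝ) (hα : α ∈ Set.Ioo (0 : ℝ) 1)
    (hcond : 1 / ((n : ℝ) + 1) < α / m)
    (G : ℕ → ℝ)
    (hG : ∀ k ≤ m, G k = sSup {y : ℝ | ∃ g : ℝ → ℝ,
      ConvexOn ℝ (Set.Icc (0 : ℝ) m) g
        ∧ (∀ j ≤ m, g j ≤ pOrd n s σ j + (j : ℝ) / (n + 1)) ∧ y = g k}) :
    khatSLC n m α s σ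
        = maxArgmin m (fun k => pOrd n s σ k - k * (α / m - 1 / (n + 1)))
      ∧
    khatSLC n m α s σ
        = maxArgmin m (fun k => (pOrd n s σ k + (k : ℝ) / (n + 1)) - α * k / m)
      ∧
    khatSLC n m α s σ
        = sSup ({0} ∪ {k | k ∈ Finset.Icc 1 m ∧ (m : ℝ) * (G k - G (k - 1)) ≤ α}) := by
  have hm0 : (0:ℝ) < m := by exact_mod_cast hm
  have hn1 : (0:ℝ) < (n:ℝ) + 1 := by positivity
  have hmax : max (α / m - 1 / ((n:ℝ) + 1)) 0 = α / m - 1 / ((n:ℝ) + 1) :=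
    max_eq_left (by linarith [hcond])
  set P : ℕ → ℝ := fun j => pOrd n s σ j + (j:ℝ) / ((n:ℝ) + 1) with hPdef
  set β : ℝ := α / m with hβ
  have hβpos : 0 < β := by rw [hβ]; exact div_pos hα.1 hm0
  set f : ℕ → ℝ := fun k => P k - β * k with hf
  have hf0 : (fun k : ℕ => pOrd n s σ k - k * max (α / m - 1 / ((n:ℝ) + 1)) 0) = f := by
    funext k
    rw [hmax, hf, hPdef, hβ]
    ring
  have hP0 : P 0 = 0 := by simp [hPdef, pOrd]
  have hPpos : ∀ j ≤ m, 0 ≤ P j := by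
    intro j _
    rw [hPdef]
    have h1 : 0 ≤ pOrd n s σ j := by
      rw [pOrd]
      split_ifs
      · exact le_refl _
      · rw [pval]; positivity
    have h2 : 0 ≤ (j:ℝ) / ((n:ℝ) + 1) := by positivity
    linarith
  have hG' : ∀ k ≤ m, G k = sSup (GCMaux.gset m P k) := hG
  -- argmin set
  set A : Set ℕ := {k | k ≤ m ∧ ∀ k' ≤ m, f k ≤ f k'} with hA
  have hAne : A.Nonempty := by
    obtain ⟨k₀, hk₀mem, hk₀min⟩ :=
      Finset.exists_min_image (Finset.range (m+1)) f ⟨0, by simp⟩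
    exact ⟨k₀, by
      simp only [Finset.mem_range] at hk₀mem
      omega, fun j hj => hk₀min j (Finset.mem_range.mpr (by omega))⟩
  have hAbdd : BddAbove A := ⟨m, fun x hx => hx.1⟩
  have hkhat : khatSLC n m α s σ = sSup A := by
    rw [khatSLC, hf0, maxArgmin, hA]
  have hK : sSup A ∈ A := Nat.sSup_mem hAne hAbdd
  set K : ℕ := sSup A with hKdef
  -- the slope set
  set S : Set ℕ := {k | k ∈ Finset.Icc 1 m ∧ (m : ℝ) * (G k - G (k-1)) ≤ α} with hS
  have hSiff : ∀ k : ℕ, ((m:ℝ) * (G k - G (k-1)) ≤ α ↔ G k - G (k-1) ≤ β) := by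
    intro k
    rw [hβ, le_div_iff₀ hm0, mul_comm]
  -- K belongs to {0} ∪ S
  have hKmem : K ∈ ({0} ∪ S : Set ℕ) := by
    rcases Nat.eq_zero_or_pos K with h0 | hpos
    · exact Or.inl h0
    · have hKm : K ≤ m := hK.1
      refine Or.inr ⟨Finset.mem_Icc.mpr ⟨hpos, hKm⟩, ?_⟩
      rw [hSiff K]
      have hGK := GCMaux.G_le hPpos hG' hK.1
      have hline : (fun x : ℝ => f K + β * (x - 0)) ((K - 1 : ℕ) : ℝ) ≤ G (K - 1) := by
        refine GCMaux.le_G (k := K - 1) hPpos hG' (by omega)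
          (GCMaux.affine_convexOn _ (convex_Icc _ _) _ _ _) ?_
        intro j hj
        have hmin := hK.2 j hj
        simp only [hf] at hmin ⊢
        linarith [hmin]
      simp only [sub_zero] at hline
      have hcast : ((K - 1 : ℕ) : ℝ) = (K : ℝ) - 1 := by
        have h1K : (1:ℕ) ≤ K := hpos
        push_cast [Nat.cast_sub h1K]
        ring
      rw [hcast] at hline
      have hfK : f K = P K - β * K := by rw [hf]
      linarith [hline, hGK]
  -- every element of {0} ∪ S is ≤ K
  have hub : ∀ x ∈ ({0} ∪ S : Set ℕ), x ≤ K := by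
    rintro x (hx | hx)
    · simp only [Set.mem_singleton_iff] at hx
      omega
    · have hSne : S.Nonempty := ⟨x, hx⟩
      have hSbdd : BddAbove S := ⟨m, fun y hy => (Finset.mem_Icc.mp hy.1).2⟩
      have hNmem : sSup S ∈ S := Nat.sSup_mem hSne hSbdd
      set N : ℕ := sSup S with hNdef
      have hxN : x ≤ N := le_csSup hSbdd hx
      obtain ⟨hNicc, hNslope0⟩ := hNmem
      have hN1 : 1 ≤ N := (Finset.mem_Icc.mp hNicc).1
      have hNm : N ≤ m := (Finset.mem_Icc.mp hNicc).2
      have hNslope : G N - G (N-1) ≤ β := (hSiff N).mp hNslope0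
      have hright : N = m ∨ (N + 1 ≤ m ∧ β < G (N+1) - G N) := by
        rcases eq_or_lt_of_le hNm with heq | hNlt
        · exact Or.inl heq
        · refine Or.inr ⟨by omega, ?_⟩
          by_contra hle
          push_neg at hle
          have hmemS : N + 1 ∈ S := by
            refine ⟨Finset.mem_Icc.mpr ⟨by omega, by omega⟩, ?_⟩
            rw [hSiff (N+1)]
            simpa using hle
          have := le_csSup hSbdd hmemS
          omega
      have htouch : G N = P N := by
        rcases hright with heq | ⟨hN1m, hstrict⟩
        · rw [heq]; exact GCMaux.touch_m hPpos hG' hm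
        · have hk2 : (N - 1) + 2 ≤ m := by omega
          have hkink : G ((N-1) + 1) - G (N-1) < G ((N-1) + 2) - G ((N-1) + 1) := by
            rw [show (N-1) + 1 = N by omega, show (N-1) + 2 = N + 1 by omega]
            linarith
          have := GCMaux.touch_kink hPpos hG' hk2 hkink
          rwa [show (N-1) + 1 = N by omega] at this
      -- N is in the argmin set A
      have hNA : N ∈ A := by
        refine ⟨hNm, fun j hj => ?_⟩
        have hGj := GCMaux.G_le hPpos hG' hj
        have hcore : G N - β * N ≤ G j - β * j := by
          rcases le_or_gt j N with hjN | hjN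
          · have hch := GCMaux.chord_upper hPpos hG' β j N hjN hNm (fun t ht htN => by
              have hmono := GCMaux.slope_mono hPpos hG' t (N-1) (by omega)
                (by omega : (N - 1) + 1 ≤ m)
              rw [show (N-1) + 1 = N by omega] at hmono
              linarith)
            linarith [hch, mul_sub β ((N:ℝ)) ((j:ℝ))]
          · have hNlt : N + 1 ≤ m := by omega
            have hstrict : β < G (N+1) - G N := by
              rcases hright with heq | ⟨_, h⟩
              · omega
              · exact h
            have hch := GCMaux.chord_lower hPpos hG' β N j (by omega) hj
              (fun t ht htj => by
                have hmono := GCMaux.slope_mono hPpos hG' N t ht (by omega)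
                linarith)
            linarith [hch, mul_sub β ((j:ℝ)) ((N:ℝ))]
        have hfN : f N = P N - β * N := by rw [hf]
        have hfj : f j = P j - β * j := by rw [hf]
        rw [hfN, hfj, ← htouch]
        linarith [hGj, hcore]
      exact le_trans hxN (le_csSup hAbdd hNA)
  have hbddU : BddAbove ({0} ∪ S : Set ℕ) := by
    refine ⟨m, ?_⟩
    rintro x (hx | hx)
    · simp only [Set.mem_singleton_iff] at hx
      omega
    · exact (Finset.mem_Icc.mp hx.1).2
  refine ⟨?_, ?_, ?_⟩
  · rw [khatSLC]
    exact congrArg (maxArgmin m) (funext fun k => by rw [hmax])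
  · rw [khatSLC]
    refine congrArg (maxArgmin m) (funext fun k => ?_)
    rw [hmax]
    ring
  · rw [hkhat]
    exact le_antisymm (le_csSup hbddU hKmem) (csSup_le ⟨0, Or.inl rfl⟩ hub)


end
end
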